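/- arXiv:2311.08868 — 5 statements merged into one kernel-verified Lean document; each statement's English description precedes it below -/
import Mathlib

section
/- There is an absolute constant C > 0 such that for every integer λ ≥ 1 and every finite simple edge-colored graph G on n vertices, G has a subgraph H with at most C·λ·n edges such that for every set F of at most λ colors and all vertices u, v, u and v are connected in H−F if and only if they are connected in G−F. -/
/-!
Take an inclusion-minimal certificate `H`. By minimality every edge `e` of `H` is a bridge of
`H − F e` for some set `F e` of at most `λ` colours with `c e ∉ F e`. Rank the colours by a
bijection `g` and call `e` good for `g` if `c e` ranks below every colour of `F e`. The good edges
form a forest: on a cycle of good edges, the edge `e₀` whose colour ranks highest would lie on a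
cycle of `H − F e₀`. So every ranking has at most `n` good edges, while every edge is good for at
least a `1/(λ+1)` fraction of the rankings, because `c e` only has to be the least of at most
`λ + 1` colours. Double counting gives `|E(H)| ≤ (λ + 1) n ≤ 2λn`.
-/

open SimpleGraph

open Finset in
theorem Finset.card_mul_card_filter_forall_apply_le {α β : Type*} [Fintype α] [DecidableEq α]
    [Fintype β] [LinearOrder β] {S : Finset α} {s : α} (hs : s ∈ S) :
    #S * #{g : α ≃ β | ∀ t ∈ S, g s ≤ g t} = Fintype.card (α ≃ β) := by
  set A : α → Finset (α ≃ β) := fun a => {g | ∀ t ∈ S, g a ≤ g t}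
  have hswap : ∀ s' ∈ S, #(A s') = #(A s) := by
    intro s' hs'
    refine card_equiv ((Equiv.swap s' s).equivCongr (Equiv.refl β)) fun g => ?_
    have hS : ∀ t ∈ S, Equiv.swap s' s t ∈ S := fun t ht => by
      rw [Equiv.swap_apply_def]; split_ifs <;> assumption
    simp only [A, mem_filter, mem_univ, true_and, Equiv.equivCongr_apply_apply,
      Equiv.symm_swap, Equiv.swap_apply_right, Equiv.coe_refl, id]
    exact ⟨fun h t ht => h _ (hS t ht),
      fun h t ht => by simpa using h _ (hS t ht)⟩
  have hdisj : (S : Set α).PairwiseDisjoint A := by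
    intro s₁ _ s₂ _ hne
    refine disjoint_left.2 fun g h₁ h₂ => hne (g.injective ?_)
    simp only [A, mem_filter, mem_univ, true_and] at h₁ h₂
    exact le_antisymm (h₁ s₂ ‹_›) (h₂ s₁ ‹_›)
  have hcover : S.biUnion A = univ := eq_univ_of_forall fun g => by
    obtain ⟨s', hs', hmin⟩ := S.exists_min_image g ⟨s, hs⟩
    exact mem_biUnion.2 ⟨s', hs', by simpa [A] using hmin⟩
  have hsum := card_biUnion hdisj
  rw [hcover, card_univ, sum_congr rfl hswap, sum_const, smul_eq_mul] at hsum
  exact hsum.symm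

namespace SimpleGraph

variable {V 𝒞 : Type*}

theorem IsAcyclic.ncard_edgeSet_le [Fintype V] {G : SimpleGraph V} (hG : G.IsAcyclic) :
    G.edgeSet.ncard ≤ Fintype.card V := by
  classical
  cases isEmpty_or_nonempty V
  · simp [Set.eq_empty_of_isEmpty G.edgeSet]
  obtain ⟨T, hGT, hT⟩ := exists_maximal_isAcyclic_of_le_isAcyclic (le_top : G ≤ ⊤) hG
  have hTree : T.IsTree := maximal_isAcyclic_iff_isTree.1 (by simpa using hT)
  calc G.edgeSet.ncard ≤ T.edgeSet.ncard := Set.ncard_le_ncard (edgeSet_mono hGT)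
    _ = T.edgeFinset.card := Set.ncard_eq_toFinset_card' _
    _ ≤ Fintype.card V := by have := hTree.card_edgeFinset; omega

theorem reachable_deleteEdges_singleton_iff {G : SimpleGraph V} {e : Sym2 V}
    (h : ¬ G.IsBridge e) {u v : V} : (G.deleteEdges {e}).Reachable u v ↔ G.Reachable u v := by
  obtain ⟨x, y⟩ := e
  rw [isBridge_iff, not_not] at h
  have hadj : G.Adj ≤ (G.deleteEdges {s(x, y)}).Reachable := fun a b hab => by
    by_cases hxy : s(a, b) = s(x, y)
    · rcases Sym2.eq_iff.1 hxy with ⟨rfl, rfl⟩ | ⟨rfl, rfl⟩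
      exacts [h, h.symm]
    · exact Adj.reachable ((deleteEdges_adj).2 ⟨hab, hxy⟩)
  refine ⟨fun huv => huv.mono (deleteEdges_le _), fun huv => ?_⟩
  exact Relation.reflTransGen_le_of_equivalence_of_le (reachable_is_equivalence _) hadj _ _
    ((reachable_iff_reflTransGen u v).1 huv)

def IsColorFaultTolerantCertificate (G : SimpleGraph V) (c : Sym2 V → 𝒞) (lam : ℕ)
    (H : SimpleGraph V) : Prop :=
  H ≤ G ∧ ∀ F : Finset 𝒞, F.card ≤ lam → ∀ u v : V,
    (H.deleteEdges {e | c e ∈ F}).Reachable u v ↔ (G.deleteEdges {e | c e ∈ F}).Reachable u v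

variable {H : SimpleGraph V} {c : Sym2 V → 𝒞} {F : Sym2 V → Finset 𝒞}

theorem isAcyclic_fromEdgeSet_of_isBridge {β : Type*} [LinearOrder β] (r : 𝒞 → β)
    (hbr : ∀ e ∈ H.edgeSet, (H.deleteEdges {e' | c e' ∈ F e}).IsBridge e) :
    (fromEdgeSet {e ∈ H.edgeSet | ∀ f ∈ F e, r (c e) < r f}).IsAcyclic := by
  classical
  intro v p hp
  have hpT : ∀ e ∈ p.edges, e ∈ H.edgeSet ∧ ∀ f ∈ F e, r (c e) < r f := fun e he =>
    ((edgeSet_fromEdgeSet _).subset (p.edges_subset_edgeSet he)).1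
  obtain ⟨e₀, he₀, hmax⟩ := p.edges.toFinset.exists_max_image (r ∘ c)
    (List.toFinset_nonempty_iff _ |>.2 (Walk.edges_eq_nil.not.2 hp.not_nil))
  rw [List.mem_toFinset] at he₀
  -- `e₀` has the highest-ranked colour on the cycle, so no cycle edge has a colour in `F e₀`
  have hpK : ∀ e ∈ p.edges, e ∈ (H.deleteEdges {e' | c e' ∈ F e₀}).edgeSet := fun e he => by
    refine (edgeSet_deleteEdges _).symm ▸ ⟨(hpT e he).1, fun hce => ?_⟩
    exact (hmax e (List.mem_toFinset.2 he)).not_gt ((hpT e₀ he₀).2 _ hce)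
  exact (hbr e₀ (hpT e₀ he₀).1).notMem_edges_of_isCycle (hp.transfer hpK)
    ((p.edges_transfer hpK).symm ▸ he₀)

open Finset in
theorem ncard_edgeSet_le_of_isBridge_of_fintype [Fintype V] [Fintype 𝒞]
    {lam : ℕ} (hcard : ∀ e ∈ H.edgeSet, (F e).card ≤ lam) (hc : ∀ e ∈ H.edgeSet, c e ∉ F e)
    (hbr : ∀ e ∈ H.edgeSet, (H.deleteEdges {e' | c e' ∈ F e}).IsBridge e) :
    H.edgeSet.ncard ≤ (lam + 1) * Fintype.card V := by
  classical
  set Ω := 𝒞 ≃ Fin (Fintype.card 𝒞)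
  set E := H.edgeSet.toFinset
  let good (g : Ω) (e : Sym2 V) : Prop := ∀ f ∈ F e, g (c e) < g f
  have hforest : ∀ g : Ω, #{e ∈ E | good g e} ≤ Fintype.card V := fun g => by
    have hacyc := isAcyclic_fromEdgeSet_of_isBridge (fun a => g a) hbr
    have hedges : (fromEdgeSet {e ∈ H.edgeSet | good g e}).edgeSet = {e ∈ E | good g e} := by
      ext e
      simp only [edgeSet_fromEdgeSet, coe_filter, Set.mem_toFinset, E]
      exact ⟨fun h => h.1, fun h => ⟨h, H.not_isDiag_of_mem_edgeSet h.1⟩⟩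
    rw [← Set.ncard_coe_finset, ← hedges]
    exact hacyc.ncard_edgeSet_le
  have hlikely : ∀ e ∈ E, Fintype.card Ω ≤ (lam + 1) * #{g : Ω | good g e} := by
    intro e he
    rw [Set.mem_toFinset] at he
    rw [← card_mul_card_filter_forall_apply_le (mem_insert_self (c e) (F e))]
    refine Nat.mul_le_mul ((card_insert_le _ _).trans (by simpa using hcard e he))
      (card_le_card fun g hg => ?_)
    simp only [mem_filter, mem_univ, true_and] at hg ⊢
    intro f hf
    exact (hg f (mem_insert_of_mem hf)).lt_of_ne
      (g.injective.ne (ne_of_mem_of_not_mem hf (hc e he)).symm)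
  have hdouble : ∑ g : Ω, #{e ∈ E | good g e} = ∑ e ∈ E, #{g : Ω | good g e} :=
    sum_card_bipartiteAbove_eq_sum_card_bipartiteBelow _
  have : #E * Fintype.card Ω ≤ (lam + 1) * Fintype.card V * Fintype.card Ω :=
    calc #E * Fintype.card Ω ≤ ∑ e ∈ E, (lam + 1) * #{g : Ω | good g e} := by
          simpa only [smul_eq_mul] using card_nsmul_le_sum _ _ _ hlikely
      _ = (lam + 1) * ∑ g : Ω, #{e ∈ E | good g e} := by rw [← mul_sum, hdouble]
      _ ≤ (lam + 1) * ∑ _g : Ω, Fintype.card V := by gcongr with g; exact hforest g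
      _ = (lam + 1) * Fintype.card V * Fintype.card Ω := by
          rw [sum_const, card_univ, smul_eq_mul]; ring
  rw [Set.ncard_eq_toFinset_card']
  exact Nat.le_of_mul_le_mul_right this (Fintype.card_pos_iff.2 ⟨Fintype.equivFin 𝒞⟩)

theorem ncard_edgeSet_le_of_isBridge [Fintype V] {lam : ℕ}
    (hcard : ∀ e ∈ H.edgeSet, (F e).card ≤ lam) (hc : ∀ e ∈ H.edgeSet, c e ∉ F e)
    (hbr : ∀ e ∈ H.edgeSet, (H.deleteEdges {e' | c e' ∈ F e}).IsBridge e) :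
    H.edgeSet.ncard ≤ (lam + 1) * Fintype.card V := by
  classical
  let F' (e : Sym2 V) : Finset (Set.range c) :=
    (F e).preimage Subtype.val Subtype.val_injective.injOn
  have hmem : ∀ e e', Set.rangeFactorization c e' ∈ F' e ↔ c e' ∈ F e :=
    fun _ _ => Finset.mem_preimage
  refine ncard_edgeSet_le_of_isBridge_of_fintype (c := Set.rangeFactorization c) (F := F')
    (fun e he => ?_) (fun e he => (hmem e e).not.2 (hc e he))
    (fun e he => by simpa only [hmem] using hbr e he)
  exact ((Finset.card_preimage _ _ _).trans_le (Finset.card_filter_le _ _)).trans (hcard e he)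

theorem exists_isBridge_of_minimal {G : SimpleGraph V} {lam : ℕ}
    (hH : Minimal (G.IsColorFaultTolerantCertificate c lam) H) {e : Sym2 V} (he : e ∈ H.edgeSet) :
    ∃ F : Finset 𝒞, F.card ≤ lam ∧ c e ∉ F ∧ (H.deleteEdges {e' | c e' ∈ F}).IsBridge e := by
  by_contra! hess
  have hlt : H.deleteEdges {e} < H :=
    (deleteEdges_le _).lt_of_ne (by simpa [Set.disjoint_singleton_right] using he)
  refine hlt.not_ge (hH.2 ⟨(deleteEdges_le _).trans hH.1.1, fun F hF u v => ?_⟩ hlt.le)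
  rw [← hH.1.2 F hF, deleteEdges_deleteEdges, Set.union_comm, ← deleteEdges_deleteEdges]
  by_cases hce : c e ∈ F
  · rw [deleteEdges_eq_self.2 (by simp [hce])]
  · exact reachable_deleteEdges_singleton_iff (hess F hF hce)

theorem ncard_edgeSet_le_of_minimal [Fintype V] {G : SimpleGraph V} {lam : ℕ}
    (hH : Minimal (G.IsColorFaultTolerantCertificate c lam) H) :
    H.edgeSet.ncard ≤ (lam + 1) * Fintype.card V := by
  choose! F hF using fun e (he : e ∈ H.edgeSet) => exists_isBridge_of_minimal hH he
  exact ncard_edgeSet_le_of_isBridge (fun e he => (hF e he).1) (fun e he => (hF e he).2.1)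
    (fun e he => (hF e he).2.2)

end SimpleGraph

/-- `λ`-CFT connectivity certificates of size `O(λn)` for edge-colored
graphs. -/
theorem stmt_4 :
    ∃ C : ℝ, 0 < C ∧
      ∀ (lam : ℕ), 1 ≤ lam →
        ∀ (V : Type) [Fintype V] (𝒞 : Type) (G : SimpleGraph V) (c : Sym2 V → 𝒞),
          ∃ H : SimpleGraph V, H ≤ G ∧
            (H.edgeSet.ncard : ℝ) ≤ C * lam * (Fintype.card V : ℝ) ∧
            ∀ F : Finset 𝒞, F.card ≤ lam → ∀ u v : V,
              (H.deleteEdges {e | c e ∈ F}).Reachable u v ↔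
                (G.deleteEdges {e | c e ∈ F}).Reachable u v := by
  refine ⟨2, two_pos, fun lam hlam V _ 𝒞 G c => ?_⟩
  obtain ⟨H, hH⟩ := exists_minimal_of_wellFoundedLT (G.IsColorFaultTolerantCertificate c lam)
    ⟨G, le_rfl, fun _ _ _ _ => Iff.rfl⟩
  have hcard : H.edgeSet.ncard ≤ 2 * lam * Fintype.card V :=
    (ncard_edgeSet_le_of_minimal hH).trans (Nat.mul_le_mul_right _ (by omega))
  exact ⟨H, hH.1.1, by exact_mod_cast hcard, hH.1.2⟩
end

section
/- There is an absolute constant C > 0 such that for every integer λ ≥ 1 and every finite simple graph G on n vertices in which both vertices and edges are colored, G has a subgraph H with at most C·λ²·n edges such that for every set F of at most λ colors and all vertices u, v, u and v are connected in H−F if and only if they are connected in G−F. -/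
/-!
Take a certificate `H` that is minimal under edge deletion. Minimality makes every edge `e` of `H`
critical: some set `F e` of at most `λ` colours leaves `e` alive but makes it a bridge of
`H - F e`. Now pick a random colour set `T`, containing each colour independently with
probability `p = 1 - 1/(2λ)`. Whenever `F e ⊆ T` and `T` misses the at most three colours of `e`,
the edge `e` is a bridge of `H - T`. A graph on `n` vertices with `c` components has at most
`n - c` bridges, and every vertex whose colour lies in `T` is isolated in `H - T`, so the number
of such edges is at most the number of vertices whose colour is not in `T`. Taking expectations,
`m p^λ (1-p)^3 ≤ n (1-p)`, and Bernoulli's inequality `p^λ ≥ 1/2` gives `m ≤ 8 λ² n`.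
The expectation is a weighted sum over the subsets of a finite set `R` of relevant colours.
-/

open Finset

namespace Finset

theorem sum_mul_card_filter {α β S : Type*} [CommSemiring S] (U : Finset α) (E : Finset β)
    (w : α → S) (P : β → α → Prop) [∀ i T, Decidable (P i T)] :
    ∑ T ∈ U, w T * #{i ∈ E | P i T} = ∑ i ∈ E, ∑ T ∈ U with P i T, w T := by
  simp only [card_filter, Nat.cast_sum, mul_sum, sum_filter]
  rw [sum_comm]
  simp

theorem sum_powerset_filter_subset_disjoint {α S : Type*} [DecidableEq α] [CommSemiring S] (p q : S)
    {R A B : Finset α} (hA : A ⊆ R) (hB : B ⊆ R) (hAB : Disjoint A B) :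
    ∑ T ∈ R.powerset with A ⊆ T ∧ Disjoint B T, p ^ #T * q ^ #(R \ T) =
      p ^ #A * q ^ #B * (p + q) ^ #(R \ (A ∪ B)) := by
  set f : α → S := fun c => if c ∉ B then p else 0
  set g : α → S := fun c => if c ∉ A then q else 0
  have hterm : ∀ T ∈ R.powerset, (∏ c ∈ T, f c) * ∏ c ∈ R \ T, g c =
      if A ⊆ T ∧ Disjoint B T then p ^ #T * q ^ #(R \ T) else 0 := by
    intro T hT
    have hAT : (∀ c ∈ R \ T, c ∉ A) ↔ A ⊆ T := by
      refine ⟨fun h c hc => ?_, fun h c hc hcA => (mem_sdiff.1 hc).2 (h hcA)⟩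
      by_contra hcT
      exact h c (mem_sdiff.2 ⟨hA hc, hcT⟩) hc
    have hBT : (∀ c ∈ T, c ∉ B) ↔ Disjoint B T := by
      rw [disjoint_right]
    simp only [f, g, prod_ite_zero, prod_const, hAT, hBT]
    split_ifs <;> simp_all
  have hprod : ∏ c ∈ R, (f c + g c) = p ^ #A * q ^ #B * (p + q) ^ #(R \ (A ∪ B)) := by
    have hR : R = A ∪ B ∪ R \ (A ∪ B) := (union_sdiff_of_subset (union_subset hA hB)).symm
    rw [hR, prod_union disjoint_sdiff, prod_union hAB, ← hR]
    congr 2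
    · refine prod_eq_pow_card fun c hc => ?_
      simp [f, g, hc, disjoint_left.1 hAB hc]
    · refine prod_eq_pow_card fun c hc => ?_
      simp [f, g, hc, disjoint_right.1 hAB hc]
    · refine prod_eq_pow_card fun c hc => ?_
      have : c ∉ A ∧ c ∉ B := by simpa using (mem_sdiff.1 hc).2
      simp [f, g, this]
  rw [sum_filter, ← sum_congr rfl hterm, ← prod_add, hprod]

end Finset

theorem card_mul_le_of_forall_card_filter_le {α ι V : Type*} [DecidableEq α] [Fintype V] {p q : ℝ}
    (hp : 0 ≤ p) (hq : 0 ≤ q) (hpq : p + q = 1) {k s : ℕ} (E : Finset ι) (R : Finset α)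
    (A B : ι → Finset α) (c : V → α)
    (hA : ∀ i ∈ E, A i ⊆ R ∧ #(A i) ≤ k) (hB : ∀ i ∈ E, B i ⊆ R ∧ #(B i) ≤ s)
    (hAB : ∀ i ∈ E, Disjoint (A i) (B i)) (hc : ∀ v, c v ∈ R)
    (h : ∀ T ⊆ R, #{i ∈ E | A i ⊆ T ∧ Disjoint (B i) T} ≤ #{v | c v ∉ T}) :
    #E * (p ^ k * q ^ s) ≤ Fintype.card V * q := by
  have hp1 : p ≤ 1 := by linarith
  have hq1 : q ≤ 1 := by linarith
  let w : Finset α → ℝ := fun T => p ^ #T * q ^ #(R \ T)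
  have hprob : ∀ {X Y : Finset α}, X ⊆ R → Y ⊆ R → Disjoint X Y →
      ∑ T ∈ R.powerset with X ⊆ T ∧ Disjoint Y T, w T = p ^ #X * q ^ #Y := by
    intro X Y hX hY hXY
    rw [sum_powerset_filter_subset_disjoint p q hX hY hXY, hpq, one_pow, mul_one]
  calc (#E : ℝ) * (p ^ k * q ^ s)
      = ∑ i ∈ E, p ^ k * q ^ s := by rw [sum_const, nsmul_eq_mul]
    _ ≤ ∑ i ∈ E, p ^ #(A i) * q ^ #(B i) := by
      refine sum_le_sum fun i hi => ?_
      exact mul_le_mul (pow_le_pow_of_le_one hp hp1 (hA i hi).2)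
        (pow_le_pow_of_le_one hq hq1 (hB i hi).2) (by positivity) (by positivity)
    _ = ∑ T ∈ R.powerset, w T * #{i ∈ E | A i ⊆ T ∧ Disjoint (B i) T} := by
      rw [sum_mul_card_filter]
      exact sum_congr rfl fun i hi => (hprob (hA i hi).1 (hB i hi).1 (hAB i hi)).symm
    _ ≤ ∑ T ∈ R.powerset, w T * #{v | c v ∉ T} := by
      refine sum_le_sum fun T hT => mul_le_mul_of_nonneg_left ?_ (by positivity)
      exact_mod_cast h T (mem_powerset.1 hT)
    _ = ∑ T ∈ R.powerset, w T * #{v ∈ univ | ∅ ⊆ T ∧ Disjoint {c v} T} := by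
      simp only [empty_subset, disjoint_singleton_left, true_and]
    _ = Fintype.card V * q := by
      rw [sum_mul_card_filter]
      simp only [hprob (empty_subset R) (singleton_subset_iff.2 (hc _)) (disjoint_empty_left _),
        card_empty, card_singleton, pow_zero, pow_one, one_mul, sum_const, card_univ,
        nsmul_eq_mul]

theorem le_eight_mul_sq_mul_of_mul_pow_le {m n : ℝ} {k : ℕ} (hk : 1 ≤ k) (hm : 0 ≤ m)
    (h : m * ((1 - 1 / (2 * k)) ^ k * (1 / (2 * k)) ^ 3) ≤ n * (1 / (2 * k))) :
    m ≤ 8 * k ^ 2 * n := by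
  set q : ℝ := 1 / (2 * k)
  have hk' : (1 : ℝ) ≤ k := by exact_mod_cast hk
  have hq : 0 < q := by positivity
  have hkq : k * q = 1 / 2 := by simp only [q]; field_simp
  have hbern : 1 / 2 ≤ (1 - q) ^ k := by
    have := one_add_mul_le_pow (a := -q) (by nlinarith) k
    rw [← sub_eq_add_neg] at this
    linarith
  have hmq : m * q ^ 2 ≤ 2 * n := by
    have : m * (1 / 2 * q ^ 3) ≤ n * q := le_trans (by gcongr) h
    nlinarith
  calc m = m * q ^ 2 * (2 * k) ^ 2 := by linear_combination (-4 * m * (k * q + 1 / 2)) * hkq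
    _ ≤ 2 * n * (2 * k) ^ 2 := by gcongr
    _ = 8 * k ^ 2 * n := by ring

namespace SimpleGraph

variable {V : Type*}

theorem reachable_deleteEdges_singleton_iff_s6 {K : SimpleGraph V} {e : Sym2 V}
    (he : ¬K.IsBridge e) {u v : V} :
    (K.deleteEdges {e}).Reachable u v ↔ K.Reachable u v := by
  refine ⟨fun h => h.mono (deleteEdges_le _), fun h => ?_⟩
  obtain ⟨W⟩ := h
  induction e with | h a b =>
  rw [isBridge_iff, not_not] at he
  induction W with
  | nil => rfl
  | @cons x y z hxy _ ih =>
    refine Reachable.trans ?_ ih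
    by_cases hxy' : s(x, y) = s(a, b)
    · rcases Sym2.eq_iff.1 hxy' with ⟨rfl, rfl⟩ | ⟨rfl, rfl⟩
      exacts [he, he.symm]
    · exact Adj.reachable (deleteEdges_adj.2 ⟨hxy, hxy'⟩)

theorem card_connectedComponent_lt_of_isBridge [Finite V] {K : SimpleGraph V} {e : Sym2 V}
    (he : e ∈ K.edgeSet) (hbr : K.IsBridge e) :
    Nat.card K.ConnectedComponent < Nat.card (K.deleteEdges {e}).ConnectedComponent := by
  classical
  induction e with | h a b =>
  have := Fintype.ofFinite (K.deleteEdges {s(a, b)}).ConnectedComponent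
  have := Fintype.ofFinite K.ConnectedComponent
  simp only [Nat.card_eq_fintype_card]
  refine Fintype.card_lt_of_surjective_not_injective _
    (ConnectedComponent.surjective_map_ofLE (deleteEdges_le _)) fun hinj => hbr ?_
  refine ConnectedComponent.eq.1 (hinj ?_)
  simpa using (Adj.reachable he : K.Reachable a b)

theorem card_add_card_connectedComponent_le_of_isBridge [Finite V] (K : SimpleGraph V)
    (D : Finset (Sym2 V)) (hD : ∀ e ∈ D, e ∈ K.edgeSet ∧ K.IsBridge e) :
    #D + Nat.card K.ConnectedComponent ≤ Nat.card V := by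
  classical
  induction D using Finset.induction generalizing K with
  | empty => simpa using Nat.card_le_card_of_surjective _ fun c => c.exists_rep
  | insert e D heD ih =>
    have hK := card_connectedComponent_lt_of_isBridge (hD e (mem_insert_self e D)).1
      (hD e (mem_insert_self e D)).2
    have := ih (K.deleteEdges {e}) fun f hf => by
      have hf' := hD f (mem_insert_of_mem hf)
      refine ⟨?_, hf'.2.anti (deleteEdges_le _)⟩
      rw [edgeSet_deleteEdges]
      exact ⟨hf'.1, by rintro rfl; exact heD hf⟩
    rw [card_insert_of_notMem heD]
    omega

theorem card_le_card_connectedComponent_of_forall_not_adj [Finite V] (K : SimpleGraph V)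
    (s : Finset V) (hs : ∀ v ∈ s, ∀ w, ¬K.Adj v w) : #s ≤ Nat.card K.ConnectedComponent := by
  classical
  have hinj : Function.Injective fun v : s => K.connectedComponentMk v := by
    rintro ⟨v, hv⟩ ⟨w, _⟩ hvw
    obtain ⟨W⟩ := ConnectedComponent.eq.1 hvw
    cases W with
    | nil => rfl
    | cons h _ => exact absurd h (hs v hv _)
  simpa using Nat.card_le_card_of_injective _ hinj

variable {𝒞 : Type*}

def blockedEdges (cE : Sym2 V → 𝒞) (cV : V → 𝒞) (F : Finset 𝒞) : Set (Sym2 V) :=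
  {e | cE e ∈ F ∨ ∃ x ∈ e, cV x ∈ F}

theorem blockedEdges_mono (cE : Sym2 V → 𝒞) (cV : V → 𝒞) {F T : Finset 𝒞} (h : F ⊆ T) :
    blockedEdges cE cV F ⊆ blockedEdges cE cV T := by
  rintro e (he | ⟨x, hx, hxF⟩)
  exacts [Or.inl (h he), Or.inr ⟨x, hx, h hxF⟩]

def edgeColors [DecidableEq V] [DecidableEq 𝒞] (cE : Sym2 V → 𝒞) (cV : V → 𝒞) (e : Sym2 V) :
    Finset 𝒞 :=
  insert (cE e) (e.toFinset.image cV)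

theorem card_edgeColors_le [DecidableEq V] [DecidableEq 𝒞] (cE : Sym2 V → 𝒞) (cV : V → 𝒞)
    (e : Sym2 V) : #(edgeColors cE cV e) ≤ 3 := by
  have : #e.toFinset ≤ 2 := by rw [Sym2.card_toFinset]; split_ifs <;> simp
  exact (card_insert_le _ _).trans (by have := card_image_le (s := e.toFinset) (f := cV); omega)

theorem mem_blockedEdges_iff_not_disjoint [DecidableEq V] [DecidableEq 𝒞] {cE : Sym2 V → 𝒞}
    {cV : V → 𝒞} {F : Finset 𝒞} {e : Sym2 V} :
    e ∈ blockedEdges cE cV F ↔ ¬Disjoint (edgeColors cE cV e) F := by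
  simp [blockedEdges, edgeColors, not_disjoint_iff, or_iff_not_imp_left]

def IsCFTCertificate (lam : ℕ) (cE : Sym2 V → 𝒞) (cV : V → 𝒞) (G H : SimpleGraph V) : Prop :=
  H ≤ G ∧ ∀ F : Finset 𝒞, #F ≤ lam → ∀ u v : V,
    (H.deleteEdges (blockedEdges cE cV F)).Reachable u v ↔
      (G.deleteEdges (blockedEdges cE cV F)).Reachable u v

theorem IsCFTCertificate.deleteEdges_singleton {lam : ℕ} {cE : Sym2 V → 𝒞} {cV : V → 𝒞}
    {G H : SimpleGraph V} (hH : IsCFTCertificate lam cE cV G H) {e : Sym2 V}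
    (he : ∀ F : Finset 𝒞, #F ≤ lam → e ∉ blockedEdges cE cV F →
      ¬(H.deleteEdges (blockedEdges cE cV F)).IsBridge e) :
    IsCFTCertificate lam cE cV G (H.deleteEdges {e}) := by
  refine ⟨(deleteEdges_le _).trans hH.1, fun F hF u v => ?_⟩
  rw [← hH.2 F hF u v, deleteEdges_deleteEdges]
  by_cases hb : e ∈ blockedEdges cE cV F
  · rw [Set.union_eq_self_of_subset_left (Set.singleton_subset_iff.2 hb)]
  · rw [Set.union_comm, ← deleteEdges_deleteEdges]
    exact reachable_deleteEdges_singleton_iff_s6 (he F hF hb)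

theorem exists_isCFTCertificate_forall_isBridge [Finite V] (lam : ℕ) (cE : Sym2 V → 𝒞)
    (cV : V → 𝒞) (G : SimpleGraph V) :
    ∃ H, IsCFTCertificate lam cE cV G H ∧ ∀ e ∈ H.edgeSet, ∃ F : Finset 𝒞, #F ≤ lam ∧
      e ∉ blockedEdges cE cV F ∧ (H.deleteEdges (blockedEdges cE cV F)).IsBridge e := by
  obtain ⟨H, hH, hmin⟩ := exists_minimal_of_wellFoundedLT (IsCFTCertificate lam cE cV G)
    ⟨G, le_rfl, fun _ _ _ _ => Iff.rfl⟩
  refine ⟨H, hH, fun e he => ?_⟩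
  by_contra! hcrit
  have hle := hmin (hH.deleteEdges_singleton hcrit) (deleteEdges_le _)
  simpa [edgeSet_deleteEdges] using edgeSet_mono hle he

theorem card_filter_subset_disjoint_edgeColors_le [Fintype V] [DecidableEq V] [DecidableEq 𝒞]
    (H : SimpleGraph V) (cE : Sym2 V → 𝒞) (cV : V → 𝒞) (E : Finset (Sym2 V))
    (F : Sym2 V → Finset 𝒞)
    (hE : ∀ e ∈ E, e ∈ H.edgeSet ∧ (H.deleteEdges (blockedEdges cE cV (F e))).IsBridge e)
    (T : Finset 𝒞) :
    #{e ∈ E | F e ⊆ T ∧ Disjoint (edgeColors cE cV e) T} ≤ #{v | cV v ∉ T} := by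
  set K := H.deleteEdges (blockedEdges cE cV T)
  have hbridges := K.card_add_card_connectedComponent_le_of_isBridge
    {e ∈ E | F e ⊆ T ∧ Disjoint (edgeColors cE cV e) T} fun e he => by
      obtain ⟨he, hFT, hdisj⟩ := mem_filter.1 he
      have hunblocked : e ∉ blockedEdges cE cV T :=
        mem_blockedEdges_iff_not_disjoint.not.2 (not_not.2 hdisj)
      refine ⟨?_, (hE e he).2.anti (deleteEdges_anti (blockedEdges_mono cE cV hFT))⟩
      rw [edgeSet_deleteEdges]
      exact ⟨(hE e he).1, hunblocked⟩
  have hisolated := K.card_le_card_connectedComponent_of_forall_not_adj {v | cV v ∈ T}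
    fun v hv w hvw =>
      (deleteEdges_adj.1 hvw).2 (Or.inr ⟨v, Sym2.mem_mk_left v w, (mem_filter.1 hv).2⟩)
  have hsplit := card_filter_add_card_filter_not (s := univ) (fun v => cV v ∈ T)
  rw [Nat.card_eq_fintype_card (α := V)] at hbridges
  rw [card_univ] at hsplit
  omega

theorem ncard_edgeSet_le_of_forall_isBridge [Fintype V] {lam : ℕ} (hlam : 1 ≤ lam)
    (H : SimpleGraph V) (cE : Sym2 V → 𝒞) (cV : V → 𝒞)
    (hcrit : ∀ e ∈ H.edgeSet, ∃ F : Finset 𝒞, #F ≤ lam ∧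
      e ∉ blockedEdges cE cV F ∧ (H.deleteEdges (blockedEdges cE cV F)).IsBridge e) :
    (H.edgeSet.ncard : ℝ) ≤ 8 * lam ^ 2 * Fintype.card V := by
  classical
  choose! F hF using hcrit
  set R := univ.image cV ∪ H.edgeFinset.biUnion fun e => F e ∪ edgeColors cE cV e
  have hsubR : ∀ e ∈ H.edgeFinset, F e ⊆ R ∧ edgeColors cE cV e ⊆ R := fun e he =>
    union_subset_iff.1 ((subset_biUnion_of_mem (fun e => F e ∪ edgeColors cE cV e) he).trans
      subset_union_right)
  have hp : 0 ≤ 1 - 1 / (2 * (lam : ℝ)) := by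
    rw [sub_nonneg, div_le_one (by positivity)]
    norm_cast
    omega
  have hcount := card_mul_le_of_forall_card_filter_le (q := 1 / (2 * lam)) (s := 3) hp
    (by positivity) (by ring)
    H.edgeFinset R F (edgeColors cE cV) cV
    (fun e he => ⟨(hsubR e he).1, (hF e (mem_edgeFinset.1 he)).1⟩)
    (fun e he => ⟨(hsubR e he).2, card_edgeColors_le cE cV e⟩)
    (fun e he => (not_not.1 (mem_blockedEdges_iff_not_disjoint.not.1
      (hF e (mem_edgeFinset.1 he)).2.1)).symm)
    (fun v => subset_union_left (mem_image_of_mem cV (mem_univ v)))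
    fun T _ => card_filter_subset_disjoint_edgeColors_le H cE cV H.edgeFinset F
      (fun e he => ⟨mem_edgeFinset.1 he, (hF e (mem_edgeFinset.1 he)).2.2⟩) T
  rw [← coe_edgeFinset, Set.ncard_coe_finset]
  exact le_eight_mul_sq_mul_of_mul_pow_le hlam (Nat.cast_nonneg _) hcount

end SimpleGraph

open SimpleGraph

/-- `λ`-CFT connectivity certificates of size `O(λ²n)` for graphs with
both vertices and edges colored. -/
theorem stmt_6 :
    ∃ C : ℝ, 0 < C ∧
      ∀ (lam : ℕ), 1 ≤ lam →
        ∀ (V : Type) [Fintype V] (𝒞 : Type) (G : SimpleGraph V)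
          (cE : Sym2 V → 𝒞) (cV : V → 𝒞),
          ∃ H : SimpleGraph V, H ≤ G ∧
            (H.edgeSet.ncard : ℝ) ≤ C * (lam : ℝ) ^ 2 * (Fintype.card V : ℝ) ∧
            ∀ F : Finset 𝒞, F.card ≤ lam → ∀ u v : V,
              (H.deleteEdges {e | cE e ∈ F ∨ ∃ x ∈ e, cV x ∈ F}).Reachable u v ↔
                (G.deleteEdges {e | cE e ∈ F ∨ ∃ x ∈ e, cV x ∈ F}).Reachable u v := by
  refine ⟨8, by norm_num, fun lam hlam V _ 𝒞 G cE cV => ?_⟩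
  obtain ⟨H, ⟨hHG, hH⟩, hcrit⟩ := exists_isCFTCertificate_forall_isBridge lam cE cV G
  exact ⟨H, hHG, ncard_edgeSet_le_of_forall_isBridge hlam H cE cV hcrit, hH⟩
end

section
/- There is an absolute constant C > 0 such that for all integers k ≥ 1 and f ≥ 1: if H is a finite simple edge-colored graph on n vertices that admits a 2k-blocking set B in which every edge of H appears in at most f pairs of B, then H has at most C·f·n^{1+1/k} edges. -/
/-!
Keep each colour independently with probability `1 / (2f)`, and keep an edge `e` when its own
colour is kept and none of the at most `f` colours paired with `e` in `B` is; then `e` survives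
with probability at least `1 / (4f)`. No cycle of length at most `2k` survives: its blocking pair
`(e, χ)` has `χ` the colour of a surviving edge, so `χ` is kept, which forbids `e` to survive.
By the Moore bound (around any vertex of a graph of minimum degree `d` and girth greater than
`2k`, the sphere of radius `j ≤ k` has at least `(d - 1)^j` vertices), a graph on `n` vertices
with no cycle of length at most `2k` has a vertex of degree at most `n^(1/k) + 1` in every
subgraph, hence at most `2 n^(1 + 1/k)` edges.
-/

open Finset

namespace SimpleGraph

variable {V : Type*} {G : SimpleGraph V} {u v : V}

/-- The edges of `p` and `q` span a graph that is not a forest, and a cycle in it uses each of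
its at most `p.length + q.length` edges at most once. -/
theorem Walk.IsPath.egirth_le_length_add {p q : G.Walk u v} (hp : p.IsPath) (hq : q.IsPath)
    (hpq : p ≠ q) : G.egirth ≤ ↑(p.length + q.length) := by
  classical
  let s : Set (Sym2 V) := {e | e ∈ p.edges ++ q.edges}
  have hsG : s ⊆ G.edgeSet := by
    intro e he
    rcases List.mem_append.mp he with he | he
    exacts [p.edges_subset_edgeSet he, q.edges_subset_edgeSet he]
  have hs : (fromEdgeSet s).edgeSet = s := by
    rw [edgeSet_fromEdgeSet, sdiff_eq_left, Set.disjoint_left]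
    exact fun e he => G.not_isDiag_of_mem_edgeSet (hsG he)
  have hp' : ∀ e ∈ p.edges, e ∈ (fromEdgeSet s).edgeSet := fun e he => by
    rw [hs]; simp [s, he]
  have hq' : ∀ e ∈ q.edges, e ∈ (fromEdgeSet s).edgeSet := fun e he => by
    rw [hs]; simp [s, he]
  have hcyclic : ¬ (fromEdgeSet s).IsAcyclic := fun h => hpq <| by
    have := congrArg (fun r : (fromEdgeSet s).Path u v => r.1.transfer G fun e he =>
      hsG (hs ▸ r.1.edges_subset_edgeSet he)) <|
      (h.subsingleton_path u v).elim ⟨p.transfer _ hp', hp.transfer hp'⟩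
        ⟨q.transfer _ hq', hq.transfer hq'⟩
    simpa only [Walk.transfer_transfer, Walk.transfer_self] using this
  obtain ⟨a, c, hc, hlen⟩ := exists_egirth_eq_length.mpr hcyclic
  have hcs : c.edges.toFinset ⊆ (p.edges ++ q.edges).toFinset := fun e he => by
    have := c.edges_subset_edgeSet (List.mem_toFinset.mp he)
    rw [hs] at this
    exact List.mem_toFinset.mpr this
  calc G.egirth ≤ (fromEdgeSet s).egirth :=
        egirth_anti ((fromEdgeSet_le (G := G)).mpr (Set.sdiff_subset.trans hsG))
    _ = c.edges.toFinset.card := by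
      rw [hlen, List.toFinset_card_of_nodup hc.edges_nodup, Walk.length_edges]
    _ ≤ ↑(p.length + q.length) := by
      gcongr
      grw [card_le_card hcs, List.toFinset_card_le]
      simp

theorem Walk.dist_lt_length_of_mem_support [DecidableEq V] {p : G.Walk u v} {x : V}
    (hx : x ∈ p.support) (hxv : x ≠ v) : G.dist u x < p.length :=
  (dist_le (p.takeUntil x hx)).trans_lt (p.length_takeUntil_lt_length hx hxv)

theorem Walk.IsPath.eq_of_length_add_le {ℓ : ℕ} (hG : ↑ℓ < G.egirth) {p q : G.Walk u v}
    (hp : p.IsPath) (hq : q.IsPath) (hlen : p.length + q.length ≤ ℓ) : p = q := by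
  by_contra hpq
  exact (hp.egirth_le_length_add hq hpq).not_gt (lt_of_le_of_lt (by exact_mod_cast hlen) hG)

variable {k : ℕ}

theorem subsingleton_setOf_adj_dist_add_one (hG : ↑(2 * k) < G.egirth) {w : V}
    (hw : G.dist v w ≤ k) :
    {a | G.Reachable v a ∧ G.Adj a w ∧ G.dist v a + 1 = G.dist v w}.Subsingleton := by
  classical
  rintro a ⟨ha, haw, hda⟩ b ⟨hb, hbw, hdb⟩
  obtain ⟨p, hp, hpl⟩ := ha.exists_path_of_dist
  obtain ⟨q, hq, hql⟩ := hb.exists_path_of_dist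
  have hwp : w ∉ p.support := fun h => by
    have := p.dist_lt_length_of_mem_support h haw.ne'
    omega
  have hwq : w ∉ q.support := fun h => by
    have := q.dist_lt_length_of_mem_support h hbw.ne'
    omega
  have hpq := (hp.concat hwp haw).eq_of_length_add_le hG (hq.concat hwq hbw)
    (by simp only [Walk.length_concat]; omega)
  exact (Walk.concat_inj hpq).1

theorem not_adj_of_dist_eq (hG : ↑(2 * k) < G.egirth) {a b : V} (ha : G.Reachable v a)
    (hb : G.Reachable v b) (hab : G.dist v a = G.dist v b) (hk : G.dist v a < k) :
    ¬ G.Adj a b := by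
  classical
  intro hadj
  obtain ⟨p, hp, hpl⟩ := ha.exists_path_of_dist
  obtain ⟨q, hq, hql⟩ := hb.exists_path_of_dist
  have hbp : b ∉ p.support := fun h => by
    have := p.dist_lt_length_of_mem_support h hadj.ne'
    omega
  have hpq := congrArg Walk.length <|
    (hp.concat hbp hadj).eq_of_length_add_le hG hq (by simp only [Walk.length_concat]; omega)
  simp only [Walk.length_concat] at hpq
  omega

section Sphere

variable [Fintype V]

/-- Defined through `edist` so that vertices not reachable from `v`, where `dist` is `0`,
are excluded. -/
noncomputable def sphere (G : SimpleGraph V) (v : V) (j : ℕ) : Finset V := {w | G.edist v w = j}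

theorem mem_sphere {j : ℕ} {w : V} :
    w ∈ G.sphere v j ↔ G.Reachable v w ∧ G.dist v w = j := by
  simp only [sphere, mem_filter, mem_univ, true_and]
  constructor
  · intro h
    have hr := reachable_of_edist_ne_top (h ▸ ENat.natCast_ne_top j)
    exact ⟨hr, by exact_mod_cast hr.coe_dist_eq_edist.trans h⟩
  · rintro ⟨hr, rfl⟩
    exact hr.coe_dist_eq_edist.symm

variable [DecidableRel G.Adj] {D j : ℕ}

theorem card_sphere_mul_le (hG : ↑(2 * k) < G.egirth) (hD : ∀ u, D ≤ G.degree u)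
    (hj : j < k) :
    #(G.sphere v j) * (D - 1) ≤ #(G.sphere v (j + 1)) := by
  classical
  have hcount := card_mul_le_card_mul G.Adj (m := D - 1) (n := 1)
    (s := G.sphere v j) (t := G.sphere v (j + 1)) ?_ ?_
  · simpa using hcount
  · intro u hu
    obtain ⟨hur, rfl⟩ := mem_sphere.mp hu
    let closer : Finset V := {a | G.Reachable v a ∧ G.Adj a u ∧ G.dist v a + 1 = G.dist v u}
    have hcloser : #closer ≤ 1 := card_le_one.mpr fun a ha b hb =>
      subsingleton_setOf_adj_dist_add_one hG hj.le (by simpa [closer] using ha)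
        (by simpa [closer] using hb)
    have hsub : G.neighborFinset u ⊆
        (G.sphere v (G.dist v u + 1)).bipartiteAbove G.Adj u ∪ closer := by
      intro w hw
      rw [mem_neighborFinset] at hw
      have hwr := hur.trans hw.reachable
      have hne : G.dist v w ≠ G.dist v u := fun h =>
        not_adj_of_dist_eq hG hur hwr h.symm hj hw
      rcases hw.diff_dist_adj (u := v) with h | h | h
      · exact absurd h hne
      · exact mem_union_left _ (by simp [bipartiteAbove, mem_sphere, hwr, h, hw])
      · exact mem_union_right _ (by simp [closer, hwr, hw.symm]; omega)
    have := (G.card_neighborFinset_eq_degree u ▸ hD u).trans <|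
      (card_le_card hsub).trans (card_union_le _ _)
    omega
  · intro w hw
    obtain ⟨-, hwd⟩ := mem_sphere.mp hw
    refine card_le_one.mpr fun a ha b hb => ?_
    simp only [bipartiteBelow, mem_filter, mem_sphere] at ha hb
    exact subsingleton_setOf_adj_dist_add_one hG (by omega)
      ⟨ha.1.1, ha.2, by omega⟩ ⟨hb.1.1, hb.2, by omega⟩

theorem pow_le_card_sphere (hG : ↑(2 * k) < G.egirth) (hD : ∀ u, D ≤ G.degree u) :
    ∀ j ≤ k, (D - 1) ^ j ≤ #(G.sphere v j)
  | 0, _ => by simpa using ⟨v, mem_sphere.mpr ⟨Reachable.refl v, dist_self⟩⟩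
  | j + 1, hj => calc
      (D - 1) ^ (j + 1) = (D - 1) ^ j * (D - 1) := pow_succ _ _
      _ ≤ #(G.sphere v j) * (D - 1) :=
        Nat.mul_le_mul_right _ (pow_le_card_sphere hG hD j (by omega))
      _ ≤ #(G.sphere v (j + 1)) := card_sphere_mul_le hG hD hj

theorem sub_one_pow_le_card_of_lt_egirth [Nonempty V] (hG : ↑(2 * k) < G.egirth)
    (hD : ∀ u, D ≤ G.degree u) : (D - 1) ^ k ≤ Fintype.card V :=
  (pow_le_card_sphere (v := Classical.arbitrary V) hG hD k le_rfl).trans (card_le_univ _)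

end Sphere

section EdgeBound

variable [Fintype V] [DecidableEq V] [DecidableRel G.Adj]

theorem card_edgeFinset_inter_sym2_le {d : ℕ}
    (hd : ∀ s : Finset V, s.Nonempty → ∃ v ∈ s, #(G.neighborFinset v ∩ s) ≤ d)
    (s : Finset V) :
    #(G.edgeFinset ∩ s.sym2) ≤ d * #s := by
  induction s using Finset.strongInduction with
  | H s ih =>
  rcases s.eq_empty_or_nonempty with rfl | hs
  · simp
  obtain ⟨v, hv, hvd⟩ := hd s hs
  have hsplit : G.edgeFinset ∩ s.sym2 ⊆
      G.edgeFinset ∩ (s.erase v).sym2 ∪ (G.neighborFinset v ∩ s).image (s(v, ·)) := by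
    intro e he
    induction e using Sym2.ind with
    | _ a b =>
    simp only [mem_inter, mem_edgeFinset, mem_edgeSet, mk_mem_sym2_iff] at he
    obtain ⟨hab, ha, hb⟩ := he
    by_cases hav : a = v
    · subst hav
      exact mem_union_right _ (mem_image.mpr ⟨b, by simp [hab, hb]⟩)
    by_cases hbv : b = v
    · subst hbv
      exact mem_union_right _ (mem_image.mpr ⟨a, by simp [hab.symm, ha, Sym2.eq_swap]⟩)
    exact mem_union_left _ (by simp [hab, ha, hb, hav, hbv])
  calc #(G.edgeFinset ∩ s.sym2)
      ≤ #(G.edgeFinset ∩ (s.erase v).sym2) + #(G.neighborFinset v ∩ s) :=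
        (card_le_card hsplit).trans <| (card_union_le _ _).trans <|
          Nat.add_le_add_left card_image_le _
    _ ≤ d * #(s.erase v) + d := Nat.add_le_add (ih _ (erase_ssubset hv)) hvd
    _ = d * #s := by
      rw [card_erase_of_mem hv, ← Nat.mul_succ, Nat.succ_eq_add_one,
        Nat.sub_add_cancel (card_pos.mpr hs)]

theorem card_edgeFinset_le_of_lt_egirth {d : ℕ} (hG : ↑(2 * k) < G.egirth)
    (hd : Fintype.card V < d ^ k) : #G.edgeFinset ≤ d * Fintype.card V := by
  classical
  have h := card_edgeFinset_inter_sym2_le (G := G) (d := d) ?_ univ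
  · rwa [sym2_univ, inter_univ, card_univ] at h
  intro s hs
  by_contra! hdeg
  have : Nonempty (s : Set V) := hs.to_subtype
  have hdeg' : ∀ v, d + 1 ≤ (G.induce (s : Set V)).degree v := fun v => by
    have h := congrArg card (map_neighborFinset_induce (G := G) (s := (s : Set V)) v)
    rw [card_map, toFinset_coe] at h
    rw [← card_neighborFinset_eq_degree]
    exact (hdeg v v.2).trans_eq (by convert h.symm)
  have hmoore := sub_one_pow_le_card_of_lt_egirth
    (hG.trans_le (Embedding.induce (G := G) s).isContained.egirth_le) hdeg'
  simp only [add_tsub_cancel_right, Finset.coe_sort_coe, Fintype.card_coe] at hmoore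
  exact (hd.trans_le hmoore).not_ge (card_le_univ s)

end EdgeBound

theorem ncard_edgeSet_le_rpow_of_lt_egirth [Fintype V] (hk : 1 ≤ k)
    (hG : ↑(2 * k) < G.egirth) :
    (G.edgeSet.ncard : ℝ) ≤ 2 * (Fintype.card V : ℝ) ^ (1 + 1 / (k : ℝ)) := by
  classical
  rw [← coe_edgeFinset, Set.ncard_coe_finset]
  set n := Fintype.card V
  rcases Nat.eq_zero_or_pos n with hn | hn
  · have : IsEmpty V := Fintype.card_eq_zero_iff.mp hn
    simp only [Finset.eq_empty_of_isEmpty G.edgeFinset, card_empty, Nat.cast_zero]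
    positivity
  set x : ℝ := (n : ℝ) ^ (1 / (k : ℝ)) with hx_def
  have hx : 1 ≤ x := Real.one_le_rpow (by exact_mod_cast hn) (by positivity)
  have hnx : (n : ℝ) = x ^ k := by
    rw [hx_def, one_div, Real.rpow_inv_natCast_pow (Nat.cast_nonneg n) (by omega)]
  have hd : n < (⌊x⌋₊ + 1) ^ k := by
    have := pow_lt_pow_left₀ (Nat.lt_floor_add_one x) (by positivity) (by omega : k ≠ 0)
    exact_mod_cast hnx ▸ this
  have hedges := card_edgeFinset_le_of_lt_egirth hG hd
  calc (#G.edgeFinset : ℝ) ≤ (⌊x⌋₊ + 1 : ℕ) * n := by exact_mod_cast hedges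
    _ ≤ (x + 1) * n := by
      gcongr
      push_cast
      linarith [Nat.floor_le (zero_le_one.trans hx)]
    _ ≤ 2 * (x * n) := by nlinarith
    _ = 2 * (n : ℝ) ^ (1 + 1 / (k : ℝ)) := by
      rw [Real.rpow_add (by exact_mod_cast hn), Real.rpow_one, mul_comm x]

end SimpleGraph

section ColourSelection

variable {ι κ : Type*} [DecidableEq κ]

theorem sum_powerset_filter_mem_disjoint {R : Type*} [CommSemiring R] (a b : R)
    {T A : Finset κ} {x : κ} (hx : x ∈ T) (hA : A ⊆ T) (hxA : x ∉ A) :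
    ∑ S ∈ T.powerset with x ∈ S ∧ Disjoint A S, a ^ #S * b ^ (#T - #S)
      = a * b ^ #A * (a + b) ^ (#T - #A - 1) := by
  set T₀ := T \ insert x A
  have hT₀ : #T = #T₀ + #A + 1 := by
    rw [card_sdiff_of_subset (insert_subset hx hA), card_insert_of_notMem hxA]
    have := card_le_card (insert_subset hx hA)
    rw [card_insert_of_notMem hxA] at this
    omega
  have hxT₀ : ∀ U ∈ T₀.powerset, x ∉ U := fun U hU hxU => by
    simpa [T₀] using mem_powerset.mp hU hxU
  have himage : {S ∈ T.powerset | x ∈ S ∧ Disjoint A S} = T₀.powerset.image (insert x) := by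
    ext S
    simp only [mem_filter, mem_powerset, mem_image]
    constructor
    · rintro ⟨hST, hxS, hAS⟩
      refine ⟨S.erase x, fun y hy => ?_, insert_erase hxS⟩
      obtain ⟨hyx, hyS⟩ := mem_erase.mp hy
      simp [T₀, hST hyS, hyx, disjoint_right.mp hAS hyS]
    · rintro ⟨U, hU, rfl⟩
      refine ⟨insert_subset hx (hU.trans sdiff_subset), mem_insert_self x U, ?_⟩
      rw [disjoint_insert_right]
      exact ⟨hxA, disjoint_of_subset_right hU (disjoint_sdiff.mono_left (subset_insert x A))⟩
  have hinj : Set.InjOn (insert x) (T₀.powerset : Set (Finset κ)) := fun U hU U' hU' h => by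
    rw [← erase_insert (hxT₀ U hU), h, erase_insert (hxT₀ U' hU')]
  rw [himage, sum_image hinj, show #T - #A - 1 = #T₀ by omega, ← sum_pow_mul_eq_add_pow,
    mul_sum]
  refine sum_congr rfl fun U hU => ?_
  have hUT₀ := card_le_card (mem_powerset.mp hU)
  rw [card_insert_of_notMem (hxT₀ U hU), hT₀,
    show #T₀ + #A + 1 - (#U + 1) = #A + (#T₀ - #U) by omega, pow_succ, pow_add]
  ring

theorem one_half_le_one_sub_pow {p : ℝ} {f m : ℕ} (hp₀ : 0 ≤ p) (hp₁ : p ≤ 1)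
    (hfp : f * p ≤ 1 / 2) (hm : m ≤ f) : 1 / 2 ≤ (1 - p) ^ m := by
  have hmp : (m : ℝ) * p ≤ f * p := by gcongr
  have := one_add_mul_le_pow (a := -p) (by linarith) m
  rw [← sub_eq_add_neg] at this
  linarith

theorem exists_mul_le_card_filter {α : Type*} {Ω : Finset α} {w : α → ℝ}
    (hw : ∀ S ∈ Ω, 0 < w S) (hw_sum : ∑ S ∈ Ω, w S = 1) {P : ι → α → Prop}
    [∀ e S, Decidable (P e S)] {E : Finset ι} {δ : ℝ}
    (hδ : ∀ e ∈ E, δ ≤ ∑ S ∈ Ω with P e S, w S) :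
    ∃ S ∈ Ω, #E * δ ≤ #{e ∈ E | P e S} := by
  have hΩ : Ω.Nonempty := nonempty_of_sum_ne_zero (hw_sum.trans_ne one_ne_zero)
  have hswap : ∑ S ∈ Ω, w S * #{e ∈ E | P e S} = ∑ e ∈ E, ∑ S ∈ Ω with P e S, w S := by
    simp_rw [card_filter, Nat.cast_sum, Nat.cast_ite, Nat.cast_one, Nat.cast_zero, mul_sum,
      mul_ite, mul_one, mul_zero, sum_filter]
    exact sum_comm
  obtain ⟨S, hS, hle⟩ := exists_le_of_sum_le (f := fun S => w S * (#E * δ))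
    (g := fun S => w S * #{e ∈ E | P e S}) hΩ <| by
      rw [← sum_mul, hw_sum, one_mul, hswap, ← nsmul_eq_mul, ← sum_const]
      exact sum_le_sum hδ
  exact ⟨S, hS, le_of_mul_le_mul_left hle (hw S hS)⟩

theorem exists_card_le_four_mul_card_filter {E : Finset ι} (c : ι → κ) (F : ι → Finset κ)
    {f : ℕ} (hf : 1 ≤ f) (hcF : ∀ e ∈ E, c e ∉ F e) (hF : ∀ e ∈ E, #(F e) ≤ f) :
    ∃ S : Finset κ, #E ≤ 4 * f * #{e ∈ E | c e ∈ S ∧ Disjoint (F e) S} := by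
  set R := E.image c ∪ E.biUnion F
  set p : ℝ := 1 / (2 * f)
  have hf' : (1 : ℝ) ≤ f := by exact_mod_cast hf
  have hp : 0 < p := by positivity
  have hp2 : p ≤ 1 / 2 := by
    rw [one_div_le_one_div (by positivity) (by norm_num)]
    linarith
  -- the law of a random subset of `R` containing each colour independently with probability `p`
  set w : Finset κ → ℝ := fun S => p ^ #S * (1 - p) ^ (#R - #S)
  have hw : ∀ S ∈ R.powerset, 0 < w S := fun S _ => by
    have : 0 < 1 - p := by linarith
    positivity
  have hw_sum : ∑ S ∈ R.powerset, w S = 1 := by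
    simp [w, sum_pow_mul_eq_add_pow]
  have hedge :
      ∀ e ∈ E, p / 2 ≤ ∑ S ∈ R.powerset with c e ∈ S ∧ Disjoint (F e) S, w S := by
    intro e he
    rw [sum_powerset_filter_mem_disjoint p (1 - p)
      (mem_union_left _ (mem_image_of_mem c he))
      (fun χ hχ => mem_union_right _ (mem_biUnion.mpr ⟨e, he, hχ⟩)) (hcF e he),
      add_sub_cancel, one_pow, mul_one]
    have hfp : (f : ℝ) * p = 1 / 2 := by simp only [p]; field_simp
    have := one_half_le_one_sub_pow hp.le (by linarith) hfp.le (hF e he)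
    nlinarith
  obtain ⟨S, -, hS⟩ := exists_mul_le_card_filter hw hw_sum hedge
  refine ⟨S, ?_⟩
  have : (#E : ℝ) ≤ 4 * f * #{e ∈ E | c e ∈ S ∧ Disjoint (F e) S} := by
    simp only [p] at hS
    field_simp at hS
    linarith
  exact_mod_cast this

end ColourSelection

namespace SimpleGraph

theorem lt_egirth_fromEdgeSet {V 𝒞 : Type*} {H : SimpleGraph V} {k : ℕ} (c : Sym2 V → 𝒞)
    (F : Sym2 V → Finset 𝒞) (S : Finset 𝒞)
    (hblock : ∀ (a : V) (W : H.Walk a a), W.IsCycle → W.length ≤ 2 * k →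
      ∃ e ∈ W.edges, ∃ e' ∈ W.edges, c e' ∈ F e)
    {K : Set (Sym2 V)} (hK : K ⊆ H.edgeSet) (hKS : ∀ e ∈ K, c e ∈ S ∧ Disjoint (F e) S) :
    ↑(2 * k) < (fromEdgeSet K).egirth := by
  by_contra! h
  obtain ⟨a, W, hW, hlen⟩ := exists_egirth_eq_length.mpr fun hacyc => by
    rw [hacyc.egirth_eq_top, top_le_iff] at h
    exact ENat.natCast_ne_top _ h
  rw [hlen, Nat.cast_le] at h
  have hWK : ∀ e ∈ W.edges, e ∈ K := fun e he =>
    Set.sdiff_subset (edgeSet_fromEdgeSet (s := K) ▸ W.edges_subset_edgeSet he)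
  obtain ⟨e, he, e', he', hce'⟩ := hblock a (W.transfer H fun e he => hK (hWK e he))
    (hW.transfer _) (by rwa [Walk.length_transfer])
  rw [Walk.edges_transfer] at he he'
  exact Finset.disjoint_left.mp (hKS e (hWK e he)).2 hce' (hKS e' (hWK e' he')).1

end SimpleGraph

open SimpleGraph

/-- an edge-colored graph admitting a `2k`-blocking set in which every
edge appears in at most `f` pairs has `O(f·n^{1+1/k})` edges. -/
theorem stmt_7 :
    ∃ C : ℝ, 0 < C ∧
      ∀ (k f : ℕ), 1 ≤ k → 1 ≤ f →
        ∀ (V : Type) [Fintype V] [DecidableEq V] (𝒞 : Type) (H : SimpleGraph V)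
          (c : Sym2 V → 𝒞) (B : Finset (Sym2 V × 𝒞)),
          -- `B` consists of pairs `(e, χ)` with `e ∈ E(H)` and `χ ≠ c(e)`
          (∀ p ∈ B, p.1 ∈ H.edgeSet ∧ p.2 ≠ c p.1) →
          -- every cycle with at most `2k` edges is blocked by some pair of `B`
          (∀ (a : V) (W : H.Walk a a), W.IsCycle → W.length ≤ 2 * k →
            ∃ p ∈ B, p.1 ∈ W.edges ∧ ∃ e' ∈ W.edges, c e' = p.2) →
          -- every edge of `H` appears in at most `f` pairs of `B`
          (∀ e : Sym2 V, (B.filter (fun p => p.1 = e)).card ≤ f) →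
          (H.edgeSet.ncard : ℝ) ≤ C * f * (Fintype.card V : ℝ) ^ (1 + 1 / (k : ℝ)) := by
  refine ⟨8, by norm_num, fun k f hk hf V _ _ 𝒞 H c B hB hblock hmult => ?_⟩
  classical
  let F : Sym2 V → Finset 𝒞 := fun e => {p ∈ B | p.1 = e}.image Prod.snd
  have hcF : ∀ e ∈ H.edgeFinset, c e ∉ F e := fun e _ hce => by
    obtain ⟨p, hp, hpc⟩ := mem_image.mp hce
    obtain ⟨hpB, rfl⟩ := mem_filter.mp hp
    exact (hB p hpB).2 hpc
  obtain ⟨S, hS⟩ := exists_card_le_four_mul_card_filter c F hf hcF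
    fun e _ => card_image_le.trans (hmult e)
  set K := {e ∈ H.edgeFinset | c e ∈ S ∧ Disjoint (F e) S}
  have hgirth : ↑(2 * k) < (fromEdgeSet (K : Set (Sym2 V))).egirth := by
    refine lt_egirth_fromEdgeSet (H := H) c F S (fun a W hW hlen => ?_) (fun e he => ?_)
      fun e he => ?_
    · obtain ⟨p, hp, hpW, e', he', hce'⟩ := hblock a W hW hlen
      exact ⟨p.1, hpW, e', he', mem_image.mpr ⟨p, mem_filter.mpr ⟨hp, rfl⟩, hce'.symm⟩⟩
    · exact mem_edgeFinset.mp (mem_filter.mp he).1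
    · exact (mem_filter.mp he).2
  have hK : (fromEdgeSet (K : Set (Sym2 V))).edgeSet = K := by
    rw [edgeSet_fromEdgeSet, sdiff_eq_left, Set.disjoint_left]
    exact fun e he => H.not_isDiag_of_mem_edgeSet (mem_edgeFinset.mp (mem_filter.mp he).1)
  have hkept := ncard_edgeSet_le_rpow_of_lt_egirth hk hgirth
  rw [hK, Set.ncard_coe_finset] at hkept
  rw [← coe_edgeFinset, Set.ncard_coe_finset]
  calc (#H.edgeFinset : ℝ) ≤ 4 * f * #K := by exact_mod_cast hS
    _ ≤ 4 * f * (2 * (Fintype.card V : ℝ) ^ (1 + 1 / (k : ℝ))) := by gcongr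
    _ = 8 * f * (Fintype.card V : ℝ) ^ (1 + 1 / (k : ℝ)) := by ring
end

section
/- There is an absolute constant C > 0 such that for every integer k ≥ 1 and every finite simple bipartite graph G whose two parts have sizes x and y and which contains no cycle with at most 2k edges, the number of edges of G is at most C·(x^{1/k}·y + x·y^{1/k}). -/
/-!
Pass to a subgraph in which every vertex of `L` has degree `> p ≈ e/4x` and every vertex of
`Lᶜ` degree `> q ≈ e/4y`, and fix an edge `uw` of it. Since there is no cycle of length at most
`2k`, a path of length `j < k` ending at `u` extends at its start in at least `p` or `q` ways
(alternately, by parity), and the paths of length `k` ending at `u` are determined by their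
starting vertices, which all lie in one part. Doing the same at `w` gives `(pq)^k ≤ xy`,
i.e. `e² ≤ 64 (x^{1/k} y) (x y^{1/k})`, and AM–GM finishes.
-/

open SimpleGraph Finset

theorem le_four_mul_rpow_of_pow_le {X Y E : ℝ} {k : ℕ} (hk : k ≠ 0) (hX : 0 < X) (hY : 0 < Y)
    (h : (E ^ 2 / (64 * X * Y)) ^ k ≤ X * Y) :
    E ≤ 4 * (X ^ (1 / (k : ℝ)) * Y + X * Y ^ (1 / (k : ℝ))) := by
  have hroot : E ^ 2 / (64 * X * Y) ≤ X ^ (1 / (k : ℝ)) * Y ^ (1 / (k : ℝ)) := by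
    rw [← Real.mul_rpow hX.le hY.le, one_div, Real.le_rpow_inv_iff_of_pos (by positivity)
      (by positivity) (by positivity), Real.rpow_natCast]
    exact h
  rw [div_le_iff₀ (by positivity)] at hroot
  have ha : 0 ≤ X ^ (1 / (k : ℝ)) * Y := by positivity
  have hb : 0 ≤ X * Y ^ (1 / (k : ℝ)) := by positivity
  nlinarith [sq_nonneg (X ^ (1 / (k : ℝ)) * Y - X * Y ^ (1 / (k : ℝ)))]

theorem cast_le_of_forall_pow_mul_le {x y e k : ℕ} (hk : k ≠ 0) (hx : 0 < x) (hy : 0 < y)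
    (h : ∀ p q : ℕ, x * (2 * p + 1) + y * (2 * q + 1) < 2 * e → (p * q) ^ k ≤ x * y) :
    (e : ℝ) ≤ 4 * ((x : ℝ) ^ (1 / (k : ℝ)) * y + x * (y : ℝ) ^ (1 / (k : ℝ))) := by
  have hxb : (x : ℝ) ≤ x * (y : ℝ) ^ (1 / (k : ℝ)) :=
    le_mul_of_one_le_right (by positivity) (Real.one_le_rpow (by exact_mod_cast hy) (by positivity))
  have hya : (y : ℝ) ≤ (x : ℝ) ^ (1 / (k : ℝ)) * y :=
    le_mul_of_one_le_left (by positivity) (Real.one_le_rpow (by exact_mod_cast hx) (by positivity))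
  by_cases hex : e < 4 * x
  · have : (e : ℝ) < 4 * x := by exact_mod_cast hex
    linarith
  by_cases hey : e < 4 * y
  · have : (e : ℝ) < 4 * y := by exact_mod_cast hey
    linarith
  push Not at hex hey
  set p := e / (4 * x)
  set q := e / (4 * y)
  have hp : e < 4 * x * (p + 1) := Nat.lt_mul_div_succ e (by omega)
  have hq : e < 4 * y * (q + 1) := Nat.lt_mul_div_succ e (by omega)
  have hp1 : 1 ≤ p := (Nat.le_div_iff_mul_le (by omega)).mpr (by omega)
  have hq1 : 1 ≤ q := (Nat.le_div_iff_mul_le (by omega)).mpr (by omega)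
  have hpx : 4 * x * p ≤ e := Nat.mul_div_le e (4 * x)
  have hqy : 4 * y * q ≤ e := Nat.mul_div_le e (4 * y)
  have hpq := h p q (by linarith)
  refine le_four_mul_rpow_of_pow_le hk (by positivity) (by positivity) ?_
  have hpR : (e : ℝ) / (8 * x) ≤ p := by
    rw [div_le_iff₀ (by positivity)]
    have : (e : ℝ) < 4 * x * (p + 1) := by exact_mod_cast hp
    have : (1 : ℝ) ≤ p := by exact_mod_cast hp1
    nlinarith
  have hqR : (e : ℝ) / (8 * y) ≤ q := by
    rw [div_le_iff₀ (by positivity)]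
    have : (e : ℝ) < 4 * y * (q + 1) := by exact_mod_cast hq
    have : (1 : ℝ) ≤ q := by exact_mod_cast hq1
    nlinarith
  calc ((e : ℝ) ^ 2 / (64 * x * y)) ^ k = ((e / (8 * x)) * (e / (8 * y))) ^ k := by
        congr 1; field_simp; ring
    _ ≤ ((p : ℝ) * q) ^ k :=
        pow_le_pow_left₀ (by positivity) (mul_le_mul hpR hqR (by positivity) (by positivity)) k
    _ ≤ x * y := by exact_mod_cast hpq

namespace SimpleGraph
variable {V : Type*} {G : SimpleGraph V}

theorem Walk.IsPath.exists_isCycle_length_le_of_ne {u v : V} {p q : G.Walk u v}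
    (hp : p.IsPath) (hq : q.IsPath) (h : p ≠ q) :
    ∃ (a : V) (c : G.Walk a a), c.IsCycle ∧ c.length ≤ p.length + q.length := by
  obtain ⟨a, b, p', q', hp', hq', hc⟩ := hp.exists_isCycle_of_ne hq h
  refine ⟨a, _, hc, ?_⟩
  rw [Walk.length_append, Walk.length_reverse]
  exact add_le_add (Walk.length_le_of_isSubwalk hp') (Walk.length_le_of_isSubwalk hq')

theorem Walk.IsPath.eq_snd_of_adj_of_mem_support [DecidableEq V] {u v w : V} {Q : G.Walk v u}
    (hQ : Q.IsPath)
    (hg : ∀ (a : V) (c : G.Walk a a), c.IsCycle → Q.length + 1 < c.length)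
    (hvw : G.Adj v w) (hw : w ∈ Q.support) : w = Q.snd := by
  have hedge : (Walk.cons hvw .nil).IsPath := by simp [hvw.ne]
  by_cases h : Q.takeUntil w hw = .cons hvw .nil
  · conv_rhs => rw [← Q.take_spec hw, h]
    simp
  · obtain ⟨a, c, hc, hlen⟩ :=
      (hQ.takeUntil hw).exists_isCycle_length_le_of_ne hedge h
    have := hg a c hc
    have := Q.length_takeUntil_le_length hw
    simp only [Walk.length_cons, Walk.length_nil] at hlen
    omega

def Walk.sigmaTail {u : V} : (Σ v, G.Walk v u) → Σ v, G.Walk v u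
  | ⟨_, .nil⟩ => ⟨u, .nil⟩
  | ⟨_, .cons _ q⟩ => ⟨_, q⟩

variable [DecidableEq V] [DecidableRel G.Adj]

theorem sum_card_filter_adj_eq_erase_add {s : Finset V} {v : V} (hv : v ∈ s) :
    ∑ u ∈ s, #{w ∈ s | G.Adj u w} =
      ∑ u ∈ s.erase v, #{w ∈ s.erase v | G.Adj u w} + 2 * #{w ∈ s | G.Adj v w} := by
  have hsplit : ∀ u, #{w ∈ s | G.Adj u w} =
      (if G.Adj u v then 1 else 0) + #{w ∈ s.erase v | G.Adj u w} := by
    intro u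
    simp only [card_filter]
    exact (add_sum_erase s _ hv).symm
  have hsym : ∑ u ∈ s.erase v, (if G.Adj u v then 1 else 0) = #{w ∈ s | G.Adj v w} := by
    rw [hsplit v, if_neg (G.irrefl), zero_add, card_filter]
    exact sum_congr rfl fun u _ => by simp only [G.adj_comm]
  rw [← add_sum_erase s _ hv, sum_congr rfl fun u _ => hsplit u, sum_add_distrib, hsym]
  ring

theorem exists_finset_forall_le_two_mul_card_filter_adj [Fintype V] (c : V → ℕ)
    (hc : ∑ v, c v < 2 * #G.edgeFinset) :
    ∃ s : Finset V, (∃ v ∈ s, ∃ w ∈ s, G.Adj v w) ∧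
      ∀ v ∈ s, c v ≤ 2 * #{w ∈ s | G.Adj v w} := by
  -- Deleting `v ∈ s` lowers `f s` by `2 * #{w ∈ s | G.Adj v w} - c v`: a maximiser works.
  let f : Finset V → ℤ := fun s =>
    ∑ u ∈ s, (#{w ∈ s | G.Adj u w} : ℤ) - ∑ u ∈ s, (c u : ℤ)
  obtain ⟨s, -, hmax⟩ := exists_max_image univ f univ_nonempty
  have hpos : 0 < f s := by
    have hdeg : ∑ u, #{w | G.Adj u w} = 2 * #G.edgeFinset := by
      simpa [← card_neighborFinset_eq_degree, neighborFinset_eq_filter] using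
        G.sum_degrees_eq_twice_card_edges
    refine lt_of_lt_of_le ?_ (hmax univ (mem_univ _))
    simp only [f, sub_pos]
    exact_mod_cast hdeg ▸ hc
  refine ⟨s, ?_, fun v hv => ?_⟩
  · by_contra! h
    have : ∑ u ∈ s, (#{w ∈ s | G.Adj u w} : ℤ) = 0 :=
      sum_eq_zero fun u hu => by simpa [filter_eq_empty_iff] using h u hu
    simp only [f, this] at hpos
    linarith [sum_nonneg fun u (_ : u ∈ s) => Int.natCast_nonneg (c u)]
  · have := hmax (s.erase v) (mem_univ _)
    simp only [f] at this
    have hc := add_sum_erase s (fun u => (c u : ℤ)) hv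
    have hd := sum_card_filter_adj_eq_erase_add (G := G) hv
    zify at hd
    omega

section Paths

variable [Fintype V] {u : V}

variable (G) in
def pathsTo (u : V) (j : ℕ) :
    Finset (Σ v, G.Walk v u) :=
  univ.sigma fun v => {p ∈ G.finsetWalkLength j v u | p.IsPath}

@[simp]
theorem mem_pathsTo {j : ℕ} {x : Σ v, G.Walk v u} :
    x ∈ G.pathsTo u j ↔ x.2.length = j ∧ x.2.IsPath := by
  simp [pathsTo, mem_finsetWalkLength_iff, and_comm]

theorem degree_sub_one_le_card_filter_sigmaTail_eq {j : ℕ}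
    (hg : ∀ (a : V) (c : G.Walk a a), c.IsCycle → j + 1 < c.length)
    {v : V} {Q : G.Walk v u} (hQ : ⟨v, Q⟩ ∈ G.pathsTo u j) :
    G.degree v - 1 ≤ #{x ∈ G.pathsTo u (j + 1) | Walk.sigmaTail x = ⟨v, Q⟩} := by
  obtain ⟨hlen, hpath⟩ := mem_pathsTo.mp hQ
  have hback : G.neighborFinset v ∩ Q.support.toFinset ⊆ {Q.snd} := fun w hw => by
    simp only [mem_inter, mem_neighborFinset, List.mem_toFinset] at hw
    exact mem_singleton.mpr (hpath.eq_snd_of_adj_of_mem_support (hlen ▸ hg) hw.1 hw.2)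
  have hfwd : G.neighborFinset v \ Q.support.toFinset ⊆
      {x ∈ G.pathsTo u (j + 1) | Walk.sigmaTail x = ⟨v, Q⟩}.image Sigma.fst := fun w hw => by
    simp only [mem_sdiff, mem_neighborFinset, List.mem_toFinset] at hw
    exact mem_image.mpr ⟨⟨w, .cons hw.1.symm Q⟩,
      mem_filter.mpr ⟨mem_pathsTo.mpr ⟨by simp [hlen], hpath.cons hw.2⟩, rfl⟩, rfl⟩
  calc G.degree v - 1
        ≤ #(G.neighborFinset v) - #(G.neighborFinset v ∩ Q.support.toFinset) := by
        rw [card_neighborFinset_eq_degree]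
        have := card_le_card hback
        rw [card_singleton] at this
        omega
    _ = #(G.neighborFinset v \ Q.support.toFinset) := by rw [card_sdiff, inter_comm]
    _ ≤ _ := (card_le_card hfwd).trans card_image_le

theorem mul_card_pathsTo_le {j m : ℕ}
    (hg : ∀ (a : V) (c : G.Walk a a), c.IsCycle → j + 1 < c.length)
    (hm : ∀ x ∈ G.pathsTo u j, m + 1 ≤ G.degree x.1) :
    m * #(G.pathsTo u j) ≤ #(G.pathsTo u (j + 1)) := by
  have hmaps : ∀ x ∈ G.pathsTo u (j + 1), Walk.sigmaTail x ∈ G.pathsTo u j := by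
    rintro ⟨v, _ | ⟨h, Q⟩⟩ hx
    · simp at hx
    · simp only [mem_pathsTo, Walk.length_cons, Walk.cons_isPath_iff] at hx
      simpa [Walk.sigmaTail] using ⟨by omega, hx.2.1⟩
  rw [card_eq_sum_card_fiberwise hmaps, mul_comm, ← smul_eq_mul, ← sum_const]
  refine sum_le_sum fun ⟨v, Q⟩ hx => ?_
  have : m + 1 ≤ G.degree v := hm _ hx
  have := degree_sub_one_le_card_filter_sigmaTail_eq hg hx
  omega

theorem prod_le_card_pathsTo {k : ℕ}
    (hg : ∀ (a : V) (c : G.Walk a a), c.IsCycle → k < c.length) (d : ℕ → ℕ)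
    (hd : ∀ j < k, ∀ x ∈ G.pathsTo u j, d j + 1 ≤ G.degree x.1) :
    ∏ j ∈ range k, d j ≤ #(G.pathsTo u k) := by
  induction k with
  | zero => simpa using ⟨⟨u, .nil⟩, by simp⟩
  | succ k ih =>
    rw [prod_range_succ, mul_comm]
    calc d k * ∏ j ∈ range k, d j
        ≤ d k * #(G.pathsTo u k) :=
          Nat.mul_le_mul_left _ <| ih (fun a c hc => by have := hg a c hc; omega)
            fun j hj => hd j (by omega)
      _ ≤ _ := mul_card_pathsTo_le hg (hd k (by omega))

theorem injOn_fst_pathsTo {k : ℕ}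
    (hg : ∀ (a : V) (c : G.Walk a a), c.IsCycle → 2 * k < c.length) :
    Set.InjOn Sigma.fst (G.pathsTo u k : Set (Σ v, G.Walk v u)) := by
  rintro ⟨v, P⟩ hP ⟨v', P'⟩ hP' (rfl : v = v')
  simp only [mem_coe, mem_pathsTo] at hP hP'
  by_contra hne
  obtain ⟨a, c, hc, hlen⟩ := hP.2.exists_isCycle_length_le_of_ne hP'.2 fun h => hne (h ▸ rfl)
  have := hg a c hc
  omega

end Paths

namespace Coloring

variable [Fintype V]

theorem prod_le_card_filter (col : G.Coloring Bool) {k p q : ℕ}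
    (hg : ∀ (a : V) (c : G.Walk a a), c.IsCycle → 2 * k < c.length)
    (hdeg : ∀ v w, G.Adj v w → (if col v then p else q) + 1 ≤ G.degree v)
    {r r' : V} (hr : G.Adj r r') :
    ∏ j ∈ range k, (if (Even j ↔ col r) then p else q) ≤
      #{v | col v ↔ (Even k ↔ col r)} := by
  have hcol : ∀ j, ∀ x ∈ G.pathsTo r j, (col x.1 ↔ (Even j ↔ col r)) := fun j x hx => by
    have := col.even_length_iff_congr x.2
    rw [(mem_pathsTo.mp hx).1] at this
    tauto
  calc _ ≤ #(G.pathsTo r k) :=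
        prod_le_card_pathsTo (fun a c hc => by have := hg a c hc; omega) _ fun j _ x hx => ?_
    _ ≤ _ := card_le_card_of_injOn Sigma.fst (fun x hx => by simpa using hcol k x hx)
        (injOn_fst_pathsTo hg)
  obtain ⟨v, P⟩ := x
  obtain ⟨w, hvw⟩ : ∃ w, G.Adj v w := by
    cases P with
    | nil => exact ⟨r', hr⟩
    | cons h _ => exact ⟨_, h⟩
  have := hdeg v w hvw
  have hv := hcol j _ hx
  by_cases hj : Even j ↔ col r = true <;> simp_all

theorem pow_mul_le_card_mul_card (col : G.Coloring Bool) {k p q : ℕ}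
    (hg : ∀ (a : V) (c : G.Walk a a), c.IsCycle → 2 * k < c.length)
    (hdeg : ∀ v w, G.Adj v w → (if col v then p else q) + 1 ≤ G.degree v)
    {u w : V} (huw : G.Adj u w) :
    (p * q) ^ k ≤ #{v | col v} * #{v | ¬ col v} := by
  have hcw : col w = !col u := Bool.eq_not_iff.mpr (col.valid huw).symm
  calc (p * q) ^ k
      = (∏ j ∈ range k, if (Even j ↔ col u) then p else q) *
          ∏ j ∈ range k, if (Even j ↔ col w) then p else q := by
        rw [← prod_mul_distrib, show (p * q) ^ k = ∏ _j ∈ range k, p * q by simp]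
        refine prod_congr rfl fun j _ => ?_
        by_cases hj : Even j <;> cases hu : col u <;> simp [hj, hu, hcw, mul_comm]
    _ ≤ #{v | col v ↔ (Even k ↔ col u)} * #{v | col v ↔ (Even k ↔ col w)} :=
        Nat.mul_le_mul (col.prod_le_card_filter hg hdeg huw)
          (col.prod_le_card_filter hg hdeg huw.symm)
    _ = #{v | col v} * #{v | ¬ col v} := by
        by_cases hk : Even k <;> cases hu : col u <;> simp [hk, hu, hcw, mul_comm]

theorem pow_mul_le_card_mul_card_of_lt (col : G.Coloring Bool) {k p q : ℕ}
    (hg : ∀ (a : V) (c : G.Walk a a), c.IsCycle → 2 * k < c.length)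
    (hpq : #{v | col v} * (2 * p + 1) + #{v | ¬ col v} * (2 * q + 1) < 2 * #G.edgeFinset) :
    (p * q) ^ k ≤ #{v | col v} * #{v | ¬ col v} := by
  classical
  obtain ⟨s, ⟨u, hu, w, hw, huw⟩, hs⟩ := exists_finset_forall_le_two_mul_card_filter_adj
    (fun v => if col v then 2 * p + 1 else 2 * q + 1) (by simpa [sum_ite, mul_comm] using hpq)
  let H := (G.induce (s : Set V)).spanningCoe
  have hHG : H ≤ G := G.spanningCoe_induce_le _
  have hdeg : ∀ v ∈ s, H.degree v = #{w ∈ s | G.Adj v w} := fun v hv => by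
    rw [← card_neighborFinset_eq_degree]
    congr 1
    ext w
    simp [H, hv, and_comm]
  refine pow_mul_le_card_mul_card (G := H) (col.comp (Hom.ofLE hHG))
    (fun a c hc => by simpa using hg a _ (hc.mapLe hHG)) (fun v w hvw => ?_)
    (show H.Adj u w by simp [H, hu, hw, huw])
  have hv : v ∈ s := by simp [H] at hvw; exact hvw.2.1
  show (if col v then p else q) + 1 ≤ H.degree v
  rw [hdeg v hv]
  have := hs v hv
  split_ifs at this ⊢ <;> omega

theorem cast_card_edgeFinset_le (col : G.Coloring Bool) {k : ℕ} (hk : k ≠ 0)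
    (hg : ∀ (a : V) (c : G.Walk a a), c.IsCycle → 2 * k < c.length) :
    (#G.edgeFinset : ℝ) ≤ 4 * ((#{v | col v} : ℝ) ^ (1 / (k : ℝ)) * #{v | ¬ col v} +
      #{v | col v} * (#{v | ¬ col v} : ℝ) ^ (1 / (k : ℝ))) := by
  obtain he | ⟨e, he⟩ := G.edgeFinset.eq_empty_or_nonempty
  · rw [he, card_empty, Nat.cast_zero]
    positivity
  induction e with | h u w =>
  have huw : G.Adj u w := by simpa using he
  have hcw : col w = !col u := Bool.eq_not_iff.mpr (col.valid huw).symm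
  refine cast_le_of_forall_pow_mul_le hk (card_pos.mpr ?_) (card_pos.mpr ?_)
    fun p q hpq => col.pow_mul_le_card_mul_card_of_lt hg hpq
  · cases hu : col u
    · exact ⟨w, by simp [hcw, hu]⟩
    · exact ⟨u, by simp [hu]⟩
  · cases hu : col u
    · exact ⟨u, by simp [hu]⟩
    · exact ⟨w, by simp [hcw, hu]⟩

end Coloring
end SimpleGraph

/-- weak bipartite Moore bounds. A bipartite graph with parts of sizes
`x` and `y` and no cycle with at most `2k` edges has `O(x^{1/k}·y + x·y^{1/k})` edges. -/
theorem stmt_11 :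
    ∃ C : ℝ, 0 < C ∧
      ∀ (k : ℕ), 1 ≤ k →
        ∀ (V : Type) [Fintype V] (G : SimpleGraph V) (L : Set V),
          -- `G` is bipartite with parts `L` and `Lᶜ`
          (∀ u v : V, G.Adj u v → (u ∈ L ↔ v ∉ L)) →
          -- no cycle with at most `2k` edges
          (∀ (a : V) (W : G.Walk a a), W.IsCycle → 2 * k < W.length) →
          (G.edgeSet.ncard : ℝ) ≤
            C * ((L.ncard : ℝ) ^ (1 / (k : ℝ)) * (Lᶜ.ncard : ℝ) +
              (L.ncard : ℝ) * (Lᶜ.ncard : ℝ) ^ (1 / (k : ℝ))) := by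
  refine ⟨4, by norm_num, fun k hk V _ G L hL hg => ?_⟩
  classical
  let col : G.Coloring Bool := Coloring.mk (fun v => decide (v ∈ L)) fun huv => by
    have := hL _ _ huv
    simp only [ne_eq, decide_eq_decide]
    tauto
  have hcol : ∀ v, col v = decide (v ∈ L) := fun _ => rfl
  have hx : L.ncard = #{v | col v} := by
    rw [Set.ncard_eq_toFinset_card']
    congr 1
    ext v
    simp [hcol]
  have hy : Lᶜ.ncard = #{v | ¬ col v} := by
    rw [Set.ncard_eq_toFinset_card']
    congr 1
    ext v
    simp [hcol]
  rw [hx, hy, ← coe_edgeFinset, Set.ncard_coe_finset]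
  exact col.cast_card_edgeFinset_le (by omega) hg
end

section
/- Let k ≥ 1 be an integer and suppose G₀ is a finite simple graph on n vertices with m₀ edges containing no cycle with at most 2k+1 edges. Then for every integer i ≥ 1 with 8·i·m₀ ≤ n², there exists a finite simple graph G on n vertices whose edges are colored with i colors such that G has at least i·m₀/2 edges and, for every color χ, the set of χ-colored edges of G contains no cycle with at most 2k+1 edges. -/
open SimpleGraph Finset

variable {V : Type} [Fintype V] [DecidableEq V]

/-- Given two non-diagonal ordered pairs, there is a permutation sending one to the other. -/
lemma exists_perm_pair (c d c' d' : V) (hcd : c ≠ d) (hcd' : c' ≠ d') :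
    ∃ τ : Equiv.Perm V, τ c = c' ∧ τ d = d' := by
  refine ⟨(Equiv.swap c c').trans (Equiv.swap (Equiv.swap c c' d) d'), ?_, ?_⟩
  · have hx : Equiv.swap c c' d ≠ c' := by
      rcases eq_or_ne d c' with rfl | hdc'
      · rw [Equiv.swap_apply_right]
        exact hcd
      · rw [Equiv.swap_apply_of_ne_of_ne hcd.symm hdc']
        exact hdc'
    simp [Equiv.trans_apply, Equiv.swap_apply_left,
      Equiv.swap_apply_of_ne_of_ne (Ne.symm hx) hcd']
  · simp [Equiv.trans_apply, Equiv.swap_apply_left]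

set_option linter.unusedSectionVars false

/-- The number of permutations sending the ordered pair (a,b) to (c,d) is a constant N
with n(n-1)·N = n!. -/
lemma count_pair (a b : V) (hab : a ≠ b) :
    ∃ N : ℕ, 0 < N ∧
      (∀ c d : V, c ≠ d →
        (Finset.univ.filter (fun σ : Equiv.Perm V => σ a = c ∧ σ b = d)).card = N) ∧
      Fintype.card V * (Fintype.card V - 1) * N = Fintype.card (Equiv.Perm V) := by
  classical
  set N := (Finset.univ.filter (fun σ : Equiv.Perm V => σ a = a ∧ σ b = b)).card with hN
  have hconst : ∀ c d : V, c ≠ d →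
      (Finset.univ.filter (fun σ : Equiv.Perm V => σ a = c ∧ σ b = d)).card = N := by
    intro c d hcd
    obtain ⟨τ, hτ1, hτ2⟩ := exists_perm_pair a b c d hab hcd
    refine (Finset.card_bij' (fun σ _ => σ.trans τ) (fun σ _ => σ.trans τ.symm) ?_ ?_ ?_ ?_).symm
    · intro σ hσ
      simp only [Finset.mem_filter, Finset.mem_univ, true_and] at hσ ⊢
      simp [Equiv.trans_apply, hσ.1, hσ.2, hτ1, hτ2]
    · intro σ hσ
      simp only [Finset.mem_filter, Finset.mem_univ, true_and] at hσ ⊢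
      simp [Equiv.trans_apply, hσ.1, hσ.2, Equiv.symm_apply_eq, hτ1, hτ2]
    · intro σ _; ext x; simp
    · intro σ _; ext x; simp
  have hpart : Fintype.card (Equiv.Perm V) =
      ∑ p ∈ Finset.univ.offDiag, ((Finset.univ.filter
        (fun σ : Equiv.Perm V => σ a = p.1 ∧ σ b = p.2)).card) := by
    rw [← Finset.card_univ]
    rw [Finset.card_eq_sum_card_fiberwise
      (f := fun σ : Equiv.Perm V => (σ a, σ b)) (t := Finset.univ.offDiag) ?_]
    · refine Finset.sum_congr rfl fun p _ => ?_
      congr 1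
      ext σ
      simp [Prod.ext_iff]
    · intro σ _
      exact Finset.mem_offDiag.mpr
        ⟨Finset.mem_univ _, Finset.mem_univ _, fun h => hab (σ.injective h)⟩
  have hsum : Fintype.card (Equiv.Perm V) =
      (Finset.univ : Finset V).offDiag.card * N := by
    rw [hpart, Finset.sum_congr rfl (fun p hp => hconst p.1 p.2
      (Finset.mem_offDiag.mp hp).2.2), Finset.sum_const, smul_eq_mul]
  have hoff : (Finset.univ : Finset V).offDiag.card =
      Fintype.card V * (Fintype.card V - 1) := by
    rw [Finset.offDiag_card, Finset.card_univ, Nat.mul_sub, Nat.mul_one]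
  refine ⟨N, ?_, hconst, by rw [← hoff, ← hsum]⟩
  rcases Nat.eq_zero_or_pos N with h | h
  · rw [h, Nat.mul_zero] at hsum
    exact absurd hsum Fintype.card_pos.ne'
  · exact h

/-- Averaging: there is a permutation whose copy of `E₀` meets `U` in at most `|E₀|/2` edges. -/
lemma exists_good_perm (E₀ U : Finset (Sym2 V)) (hE : ∀ e ∈ E₀, ¬ e.IsDiag)
    (hU : 4 * (E₀.card * U.card) ≤ E₀.card * (Fintype.card V * (Fintype.card V - 1))) :
    ∃ σ : Equiv.Perm V, 2 * ((E₀.image (Sym2.map σ)) ∩ U).card ≤ E₀.card := by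
  classical
  rcases E₀.eq_empty_or_nonempty with rfl | ⟨e₀, he₀⟩
  · exact ⟨1, by simp⟩
  by_contra hcon
  push_neg at hcon
  -- extract two distinct vertices from e₀
  obtain ⟨a, b⟩ := e₀
  have hab : a ≠ b := fun h => hE _ he₀ (Sym2.mk_isDiag_iff.mpr h)
  obtain ⟨N, hNpos, hNconst, hNcard⟩ := count_pair a b hab
  -- the single-pair fiber bound
  have hfiber : ∀ (e : Sym2 V), ¬ e.IsDiag → ∀ f : Sym2 V,
      (Finset.univ.filter (fun σ : Equiv.Perm V => Sym2.map σ e = f)).card ≤ 2 * N := by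
    intro e he f
    obtain ⟨x, y⟩ := e
    obtain ⟨c, d⟩ := f
    have hxy : x ≠ y := fun h => he (Sym2.mk_isDiag_iff.mpr h)
    have hsplit : (Finset.univ.filter (fun σ : Equiv.Perm V => Sym2.map σ s(x, y) = s(c, d)))
        ⊆ (Finset.univ.filter (fun σ : Equiv.Perm V => σ x = c ∧ σ y = d)) ∪
          (Finset.univ.filter (fun σ : Equiv.Perm V => σ x = d ∧ σ y = c)) := by
      intro σ hσ
      simp only [Finset.mem_filter, Finset.mem_univ, true_and, Sym2.map_pair_eq,
        Sym2.eq_iff, Finset.mem_union] at hσ ⊢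
      exact hσ
    refine le_trans (Finset.card_le_card hsplit) (le_trans (Finset.card_union_le _ _) ?_)
    rcases eq_or_ne c d with rfl | hcd
    · have h1 : (Finset.univ.filter (fun σ : Equiv.Perm V => σ x = c ∧ σ y = c)) = ∅ := by
        ext σ
        simp only [Finset.mem_filter, Finset.mem_univ, true_and, Finset.notMem_empty,
          iff_false, not_and]
        intro h1 h2
        exact hxy (σ.injective (h1.trans h2.symm))
      simp [h1]
    · obtain ⟨N', hN'pos, hN'const, hN'card⟩ := count_pair x y hxy
      have hn2 : 0 < Fintype.card V * (Fintype.card V - 1) := by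
        have : Nontrivial V := ⟨⟨x, y, hxy⟩⟩
        have h2 : 2 ≤ Fintype.card V := Fintype.one_lt_card
        have : 1 ≤ Fintype.card V - 1 := by omega
        exact Nat.mul_pos (by omega) this
      have hNN : N' = N := Nat.eq_of_mul_eq_mul_left hn2 (hN'card.trans hNcard.symm)
      have e1 := hN'const c d hcd
      have e2 := hN'const d c hcd.symm
      omega
  -- the global averaging
  set P := Fintype.card (Equiv.Perm V) with hP
  have hPpos : 0 < P := Fintype.card_pos
  have key : ∀ σ : Equiv.Perm V, ((E₀.image (Sym2.map σ)) ∩ U).card ≤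
      (E₀.filter (fun e => Sym2.map σ e ∈ U)).card := by
    intro σ
    refine le_trans (Finset.card_le_card (t := (E₀.filter (fun e => Sym2.map σ e ∈ U)).image (Sym2.map σ)) ?_) Finset.card_image_le
    intro x hx
    obtain ⟨hx1, hx2⟩ := Finset.mem_inter.mp hx
    obtain ⟨e, heE, rfl⟩ := Finset.mem_image.mp hx1
    exact Finset.mem_image.mpr ⟨e, Finset.mem_filter.mpr ⟨heE, hx2⟩, rfl⟩
  have hinner : ∀ e ∈ E₀, (∑ σ : Equiv.Perm V, if Sym2.map σ e ∈ U then 1 else 0) ≤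
      U.card * (2 * N) := by
    intro e he
    have h1 : (∑ σ : Equiv.Perm V, if Sym2.map σ e ∈ U then 1 else 0) =
        (Finset.univ.filter (fun σ : Equiv.Perm V => Sym2.map σ e ∈ U)).card :=
      (Finset.card_filter _ _).symm
    rw [h1]
    have hsub : Finset.univ.filter (fun σ : Equiv.Perm V => Sym2.map σ e ∈ U) ⊆
        U.biUnion (fun f => Finset.univ.filter (fun σ : Equiv.Perm V => Sym2.map σ e = f)) := by
      intro σ hσ
      exact Finset.mem_biUnion.mpr ⟨Sym2.map σ e, (Finset.mem_filter.mp hσ).2,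
        Finset.mem_filter.mpr ⟨Finset.mem_univ _, rfl⟩⟩
    calc (Finset.univ.filter (fun σ : Equiv.Perm V => Sym2.map σ e ∈ U)).card
        ≤ ∑ f ∈ U, (Finset.univ.filter (fun σ : Equiv.Perm V => Sym2.map σ e = f)).card :=
          le_trans (Finset.card_le_card hsub) (Finset.card_biUnion_le)
      _ ≤ ∑ f ∈ U, 2 * N := Finset.sum_le_sum fun f _ => hfiber e (hE e he) f
      _ = U.card * (2 * N) := by rw [Finset.sum_const, smul_eq_mul]
  have hS2 : (∑ σ : Equiv.Perm V, ((E₀.image (Sym2.map σ)) ∩ U).card) ≤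
      E₀.card * (U.card * (2 * N)) := by
    calc (∑ σ : Equiv.Perm V, ((E₀.image (Sym2.map σ)) ∩ U).card)
        ≤ ∑ σ : Equiv.Perm V, (E₀.filter (fun e => Sym2.map σ e ∈ U)).card :=
          Finset.sum_le_sum fun σ _ => key σ
      _ = ∑ σ : Equiv.Perm V, ∑ e ∈ E₀, (if Sym2.map σ e ∈ U then 1 else 0) :=
          Finset.sum_congr rfl fun σ _ => Finset.card_filter _ _
      _ = ∑ e ∈ E₀, ∑ σ : Equiv.Perm V, (if Sym2.map σ e ∈ U then 1 else 0) :=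
          Finset.sum_comm
      _ ≤ ∑ e ∈ E₀, U.card * (2 * N) := Finset.sum_le_sum hinner
      _ = E₀.card * (U.card * (2 * N)) := by rw [Finset.sum_const, smul_eq_mul]
  have hS1 : P * (E₀.card + 1) ≤
      2 * ∑ σ : Equiv.Perm V, ((E₀.image (Sym2.map σ)) ∩ U).card := by
    rw [Finset.mul_sum]
    calc P * (E₀.card + 1) = ∑ _σ : Equiv.Perm V, (E₀.card + 1) := by
          rw [Finset.sum_const, smul_eq_mul, Finset.card_univ]
      _ ≤ _ := Finset.sum_le_sum fun σ _ => hcon σ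
  have hfinal : P * (E₀.card + 1) ≤ P * E₀.card := by
    calc P * (E₀.card + 1) ≤ 2 * (E₀.card * (U.card * (2 * N))) :=
          le_trans hS1 (by omega)
      _ = (4 * (E₀.card * U.card)) * N := by ring
      _ ≤ (E₀.card * (Fintype.card V * (Fintype.card V - 1))) * N :=
          Nat.mul_le_mul_right N hU
      _ = E₀.card * (Fintype.card V * (Fintype.card V - 1) * N) := by ring
      _ = P * E₀.card := by rw [hNcard]; ring
  have := Nat.le_of_mul_le_mul_left hfinal hPpos
  omega

/-- Greedily pack `j` permuted copies of `E₀` with small total overlap. -/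
lemma build_perms (E₀ : Finset (Sym2 V)) (hE : ∀ e ∈ E₀, ¬ e.IsDiag) (i : ℕ)
    (hle : 4 * (i * E₀.card) * E₀.card ≤ E₀.card * (Fintype.card V * (Fintype.card V - 1))) :
    ∀ j, j ≤ i → ∃ g : Fin j → Equiv.Perm V,
      (Finset.univ.biUnion (fun t => E₀.image (Sym2.map (g t)))).card ≤ j * E₀.card ∧
      j * E₀.card ≤ 2 * (Finset.univ.biUnion (fun t => E₀.image (Sym2.map (g t)))).card := by
  classical
  intro j
  induction j with
  | zero => intro _; exact ⟨Fin.elim0, by simp⟩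
  | succ j ih =>
    intro hji
    obtain ⟨g, hub, hlb⟩ := ih (le_trans (Nat.le_succ j) hji)
    set U := Finset.univ.biUnion (fun t => E₀.image (Sym2.map (g t))) with hUdef
    have hUcard : 4 * (E₀.card * U.card) ≤
        E₀.card * (Fintype.card V * (Fintype.card V - 1)) := by
      calc 4 * (E₀.card * U.card) ≤ 4 * (E₀.card * (j * E₀.card)) := by
            exact Nat.mul_le_mul_left 4 (Nat.mul_le_mul_left _ hub)
        _ ≤ 4 * (i * E₀.card) * E₀.card := by
            have h4 : 4 * (E₀.card * (j * E₀.card)) = (4 * j) * (E₀.card * E₀.card) := by ring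
            have h5 : 4 * (i * E₀.card) * E₀.card = (4 * i) * (E₀.card * E₀.card) := by ring
            rw [h4, h5]
            exact Nat.mul_le_mul_right _ (by omega)
        _ ≤ _ := hle
    obtain ⟨σ, hσ⟩ := exists_good_perm E₀ U hE hUcard
    refine ⟨Fin.cases σ g, ?_⟩
    set A := E₀.image (Sym2.map σ) with hAdef
    have hbu : (Finset.univ.biUnion
        (fun t : Fin (j+1) => E₀.image (Sym2.map ((Fin.cases σ g : Fin (j+1) → Equiv.Perm V) t))))
        = A ∪ U := by
      ext x
      constructor
      · intro hx
        obtain ⟨t, -, ht⟩ := Finset.mem_biUnion.mp hx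
        refine Finset.mem_union.mpr ?_
        induction t using Fin.cases with
        | zero => exact Or.inl (by simpa only [Fin.cases_zero] using ht)
        | succ t' =>
          refine Or.inr ?_
          rw [hUdef]
          exact Finset.mem_biUnion.mpr
            ⟨t', Finset.mem_univ _, by simpa only [Fin.cases_succ] using ht⟩
      · intro hx
        rcases Finset.mem_union.mp hx with hx | hx
        · exact Finset.mem_biUnion.mpr
            ⟨0, Finset.mem_univ _, by simpa only [Fin.cases_zero] using hx⟩
        · rw [hUdef] at hx
          obtain ⟨t, -, ht⟩ := Finset.mem_biUnion.mp hx
          exact Finset.mem_biUnion.mpr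
            ⟨t.succ, Finset.mem_univ _, by simpa only [Fin.cases_succ] using ht⟩
    rw [hbu]
    have hAcard : A.card = E₀.card :=
      Finset.card_image_of_injective _ (Sym2.map.injective σ.injective)
    have hsum : (A ∪ U).card + (A ∩ U).card = A.card + U.card :=
      Finset.card_union_add_card_inter A U
    have hmul : (j + 1) * E₀.card = j * E₀.card + E₀.card := by ring
    constructor
    · omega
    · omega

lemma isDiag_of_map_isDiag (σ : Equiv.Perm V) (e : Sym2 V)
    (h : (Sym2.map (σ : V → V) e).IsDiag) : e.IsDiag := by
  induction e using Sym2.ind with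
  | _ x y =>
    rw [Sym2.map_pair_eq, Sym2.mk_isDiag_iff] at h
    exact Sym2.mk_isDiag_iff.mpr (σ.injective h)

/-- packing `i` copies of a high-girth graph. If `G₀` has `n` vertices,
`m₀` edges and no cycle with at most `2k+1` edges, then for every `i ≥ 1` with
`8·i·m₀ ≤ n²` there is a graph `G` on the same `n` vertices with edges colored by `i`
colors, at least `i·m₀/2` edges, and no monochromatic cycle with at most `2k+1`
edges. -/
theorem stmt_16 (k : ℕ) (hk : 1 ≤ k) (V : Type) [Fintype V] (G₀ : SimpleGraph V)
    (hgirth : ∀ (a : V) (W : G₀.Walk a a), W.IsCycle → 2 * k + 1 < W.length) :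
    ∀ i : ℕ, 1 ≤ i → 8 * i * G₀.edgeSet.ncard ≤ (Fintype.card V) ^ 2 →
      ∃ (G : SimpleGraph V) (c : Sym2 V → Fin i),
        i * G₀.edgeSet.ncard ≤ 2 * G.edgeSet.ncard ∧
        ∀ χ : Fin i, ∀ (a : V)
          (W : (SimpleGraph.fromEdgeSet {e | e ∈ G.edgeSet ∧ c e = χ}).Walk a a),
          W.IsCycle → 2 * k + 1 < W.length := by
  classical
  intro i hi h8
  set n := Fintype.card V with hn
  have hfin : G₀.edgeSet.Finite := Set.toFinite _
  set E₀ := hfin.toFinset with hE₀def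
  have hncard : G₀.edgeSet.ncard = E₀.card := Set.ncard_eq_toFinset_card _ hfin
  have hmemE₀ : ∀ e, e ∈ E₀ ↔ e ∈ G₀.edgeSet := fun e => hfin.mem_toFinset
  have hEnd : ∀ e ∈ E₀, ¬ e.IsDiag :=
    fun e he => G₀.not_isDiag_of_mem_edgeSet ((hmemE₀ e).mp he)
  rcases E₀.eq_empty_or_nonempty with hempty | ⟨e₀, he₀⟩
  · refine ⟨⊥, fun _ => ⟨0, hi⟩, by simp [hncard, hempty], ?_⟩
    intro χ a W hW
    exfalso
    cases W with
    | nil => exact hW.ne_nil rfl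
    | cons h p =>
      rw [SimpleGraph.fromEdgeSet_adj] at h
      simpa using h.1
  · -- two distinct vertices
    have hn2 : 2 ≤ n := by
      have hnd := hEnd e₀ he₀
      obtain ⟨x, y⟩ := e₀
      have hxy : x ≠ y := fun h => hnd (Sym2.mk_isDiag_iff.mpr h)
      have : Nontrivial V := ⟨⟨x, y, hxy⟩⟩
      exact Fintype.one_lt_card
    have hle : 4 * (i * E₀.card) * E₀.card ≤ E₀.card * (n * (n - 1)) := by
      rw [hncard] at h8
      obtain ⟨n', hn'⟩ : ∃ n', n = n' + 2 := ⟨n - 2, by omega⟩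
      rw [hn'] at h8 ⊢
      have h1 : n' + 2 - 1 = n' + 1 := rfl
      rw [h1]
      nlinarith [Nat.mul_le_mul_left E₀.card h8,
        Nat.mul_le_mul_left E₀.card (show (n'+2)^2 ≤ 2*((n'+2)*(n'+1)) by nlinarith)]
    obtain ⟨g, hub, hlb⟩ := build_perms E₀ hEnd i hle i le_rfl
    set U := Finset.univ.biUnion (fun t => E₀.image (Sym2.map (g t))) with hUdef
    have hUnd : ∀ e ∈ U, ¬ e.IsDiag := by
      intro e he hdiag
      rw [hUdef] at he
      obtain ⟨t, -, ht⟩ := Finset.mem_biUnion.mp he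
      obtain ⟨e', he', rfl⟩ := Finset.mem_image.mp ht
      exact hEnd e' he' (isDiag_of_map_isDiag _ _ hdiag)
    have hGE : (SimpleGraph.fromEdgeSet (↑U : Set (Sym2 V))).edgeSet = ↑U := by
      rw [SimpleGraph.edgeSet_fromEdgeSet]
      ext e
      simp only [Set.mem_diff, Set.mem_setOf_eq, Finset.mem_coe]
      exact ⟨fun h => h.1, fun h => ⟨h, hUnd e h⟩⟩
    refine ⟨SimpleGraph.fromEdgeSet ↑U,
      fun e => if h : ∃ t : Fin i, e ∈ E₀.image (Sym2.map (g t)) then h.choose else ⟨0, hi⟩,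
      ?_, ?_⟩
    · rw [hncard, hGE, Set.ncard_coe_finset]
      exact hlb
    · intro χ a W hW
      set σ := g χ with hσdef
      -- the color class is contained in the χ-th copy
      have hsub : {e | e ∈ (SimpleGraph.fromEdgeSet (↑U : Set (Sym2 V))).edgeSet ∧
          (if h : ∃ t : Fin i, e ∈ E₀.image (Sym2.map (g t)) then h.choose else ⟨0, hi⟩) = χ}
          ⊆ ↑(E₀.image (Sym2.map σ)) := by
        intro e he
        obtain ⟨he1, he2⟩ := he
        rw [hGE, Finset.mem_coe, hUdef] at he1
        obtain ⟨t, -, ht⟩ := Finset.mem_biUnion.mp he1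
        have hex : ∃ t : Fin i, e ∈ E₀.image (Sym2.map (g t)) := ⟨t, ht⟩
        rw [dif_pos hex] at he2
        have := hex.choose_spec
        rw [he2] at this
        exact Finset.mem_coe.mpr this
      have hmono := SimpleGraph.fromEdgeSet_mono hsub
      -- map the walk into the copy, then into G₀ via σ.symm
      have φadj : ∀ {u v : V},
          (SimpleGraph.fromEdgeSet (↑(E₀.image (Sym2.map σ)) : Set (Sym2 V))).Adj u v →
          G₀.Adj (σ.symm u) (σ.symm v) := by
        intro u v h
        rw [SimpleGraph.fromEdgeSet_adj] at h
        obtain ⟨e, heE, heq⟩ := Finset.mem_image.mp (Finset.mem_coe.mp h.1)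
        have he2 : Sym2.map (σ.symm : V → V) s(u, v) = e := by
          rw [← heq, Sym2.map_map]
          simp
        rw [Sym2.map_pair_eq] at he2
        rw [← SimpleGraph.mem_edgeSet, he2]
        exact (hmemE₀ e).mp heE
      let φ : (SimpleGraph.fromEdgeSet (↑(E₀.image (Sym2.map σ)) : Set (Sym2 V))) →g G₀ :=
        ⟨(σ.symm : V → V), φadj⟩
      have hφinj : Function.Injective φ := σ.symm.injective
      have hcyc : ((W.mapLe hmono).map φ).IsCycle :=
        ((SimpleGraph.Walk.map_isCycle_iff_of_injective hφinj).mpr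
          ((SimpleGraph.Walk.mapLe_isCycle hmono).mpr hW))
      have hlen : ((W.mapLe hmono).map φ).length = W.length := by
        rw [SimpleGraph.Walk.length_map, SimpleGraph.Walk.mapLe,
          SimpleGraph.Walk.length_map]
      have := hgirth _ _ hcyc
      omega
end
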